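/- arXiv:1212.2324 — 5 statements merged into one kernel-verified Lean document; each statement's English description precedes it below -/
import Mathlib

section
/- For 0 ≤ N and r ≥ 1, the multiple stochastic integral I^r(f_r) is F_N-measurable if and only if f_r 1_{[0,N]^r} = f_r (as elements of L²(Δ_r)). -/
/-!
If `f` vanishes off `[0, N]^r`, then `I^r(f)` is a finite sum of products of increments `Y n` with
`n ≤ N`. Conversely, conditioning successively on `F_{n-1}` and using `E[Y_n | F_{n-1}] = 0`,
`E[Y_n^a Y_n^b | F_{n-1}] = δ_ab` shows that the products `∏ t, Y (i t) (k t)` over injective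
tuples are orthonormal up to reordering, so pairing `I^r(f)` with the product attached to `(i, k)`
gives `r! f(i, k)`. If `I^r(f)` is `F_N`-measurable and `M = max i > N`, the integrand of that
pairing is a.e. an `F_{M-1}`-measurable function times `Y M`, so it vanishes and `f(i, k) = 0`.
-/

open MeasureTheory Finset

noncomputable section

/-- `F_{n-1}`, with the convention that `F_{-1}` is the trivial σ-algebra. -/
def Fprev {Ω : Type*} (F : ℕ → MeasurableSpace Ω) : ℕ → MeasurableSpace Ω
  | 0 => ⊥
  | n + 1 => F n

/-- The discrete multiple stochastic integral `I^r(f)` of a function on `Δ_r`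
(encoded as a function on all tuples, vanishing off the injective ones). -/
def multInt {Ω : Type*} (d r : ℕ) (Y : ℕ → Ω → Fin d → ℝ)
    (f : (Fin r → ℕ) → (Fin r → Fin d) → ℝ) (ω : Ω) : ℝ :=
  ∑' i : Fin r → ℕ, ∑' k : Fin r → Fin d,
    (if Function.Injective i then f i k * ∏ t, Y (i t) ω (k t) else 0)

open Function Equiv
open scoped ENNReal

theorem le_Fprev_of_lt {Ω : Type*} {F : ℕ → MeasurableSpace Ω} (hF : Monotone F) {n : ℕ} :
    ∀ {M : ℕ}, n < M → F n ≤ Fprev F M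
  | _ + 1, h => hF (Nat.lt_succ_iff.mp h)

theorem Fprev_le {Ω : Type*} [mΩ : MeasurableSpace Ω] {F : ℕ → MeasurableSpace Ω}
    (hF : ∀ n, F n ≤ mΩ) : ∀ n, Fprev F n ≤ mΩ
  | 0 => bot_le
  | n + 1 => hF n

theorem integral_mul_eq_of_condExp_ae_eq_const {Ω : Type*} [mΩ : MeasurableSpace Ω]
    {μ : Measure Ω} [IsFiniteMeasure μ] {G : MeasurableSpace Ω} (hG : G ≤ mΩ) {X Z : Ω → ℝ}
    {c : ℝ} (hX : StronglyMeasurable[G] X) (hZ : Integrable Z μ) (hXZ : Integrable (X * Z) μ)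
    (hc : μ[Z | G] =ᵐ[μ] fun _ => c) :
    ∫ ω, X ω * Z ω ∂μ = c * ∫ ω, X ω ∂μ := by
  have hpull : μ[X * Z | G] =ᵐ[μ] fun ω => X ω * c := by
    filter_upwards [condExp_mul_of_stronglyMeasurable_left hX hXZ hZ, hc] with ω h hω
    rw [h, Pi.mul_apply, hω]
  calc ∫ ω, X ω * Z ω ∂μ = ∫ ω, μ[X * Z | G] ω ∂μ := (integral_condExp hG).symm
    _ = ∫ ω, X ω * c ∂μ := integral_congr_ae hpull
    _ = c * ∫ ω, X ω ∂μ := by rw [integral_mul_const, mul_comm]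

theorem memLp_top_finset_prod {Ω ι : Type*} [MeasurableSpace Ω] {μ : Measure Ω} {s : Finset ι}
    {g : ι → Ω → ℝ} (hg : ∀ i ∈ s, MemLp (g i) ∞ μ) : MemLp (fun ω => ∏ i ∈ s, g i ω) ∞ μ := by
  simpa using MemLp.prod' (p := fun _ => ∞) hg

/-- `none` stands for a time at which no increment is taken, so that products over an injective
tuple of times become products over all times `n < M`. -/
def optIncr {Ω : Type*} {d : ℕ} (Y : ℕ → Ω → Fin d → ℝ) (n : ℕ) (ω : Ω) : Option (Fin d) → ℝ
  | none => 1
  | some κ => Y n ω κ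

theorem optIncr_some {Ω : Type*} {d : ℕ} (Y : ℕ → Ω → Fin d → ℝ) (n : ℕ) (ω : Ω) (κ : Fin d) :
    optIncr Y n ω (some κ) = Y n ω κ :=
  rfl

/-- The tuple `(i, k)` read as the partial map `i t ↦ k t` from times to labels. -/
def tupleLabel {r d : ℕ} (i : Fin r → ℕ) (k : Fin r → Fin d) (n : ℕ) : Option (Fin d) :=
  (partialInv i n).map k

section TupleLabel

variable {r d : ℕ} {i b : Fin r → ℕ} {k kb : Fin r → Fin d}

theorem tupleLabel_eq_some_iff (hi : Injective i) {n : ℕ} {κ : Fin d} :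
    tupleLabel i k n = some κ ↔ ∃ t, i t = n ∧ k t = κ := by
  simp only [tupleLabel, Option.map_eq_some_iff, hi.isPartialInv _ _]

theorem tupleLabel_apply (hi : Injective i) (t : Fin r) : tupleLabel i k (i t) = some (k t) :=
  (tupleLabel_eq_some_iff hi).2 ⟨t, rfl, rfl⟩

theorem tupleLabel_eq_none (hi : Injective i) {n : ℕ} (hn : n ∉ Set.range i) :
    tupleLabel i k n = none :=
  Option.eq_none_iff_forall_ne_some.2 fun κ h => by
    obtain ⟨t, rfl, -⟩ := (tupleLabel_eq_some_iff hi).1 h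
    exact hn ⟨t, rfl⟩

theorem tupleLabel_eq_iff (hi : Injective i) (hb : Injective b) :
    tupleLabel i k = tupleLabel b kb ↔ ∃ σ : Perm (Fin r), i = b ∘ σ ∧ k = kb ∘ σ := by
  constructor
  · intro h
    have hmatch : ∀ t, ∃ s, b s = i t ∧ kb s = k t := fun t =>
      (tupleLabel_eq_some_iff hb).1 (h ▸ tupleLabel_apply hi t)
    choose σ hσ using hmatch
    have hσ_inj : Injective σ := fun t t' h => hi (by rw [← (hσ t).1, ← (hσ t').1, h])
    exact ⟨.ofBijective σ (Finite.injective_iff_bijective.mp hσ_inj),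
      funext fun t => (hσ t).1.symm, funext fun t => (hσ t).2.symm⟩
  · rintro ⟨σ, rfl, rfl⟩
    funext n
    refine Option.ext fun κ => ?_
    rw [tupleLabel_eq_some_iff (hb.comp σ.injective), tupleLabel_eq_some_iff hb]
    exact ⟨fun ⟨t, h⟩ => ⟨σ t, h⟩, fun ⟨s, h⟩ => ⟨σ.symm s, by simpa using h⟩⟩

theorem prod_optIncr_tupleLabel {Ω : Type*} (Y : ℕ → Ω → Fin d → ℝ) (ω : Ω) (hi : Injective i)
    {M : ℕ} (hM : ∀ t, i t < M) :
    ∏ n ∈ range M, optIncr Y n ω (tupleLabel i k n) = ∏ t, Y (i t) ω (k t) := by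
  classical
  rw [← prod_subset (s₁ := univ.image i)]
  · rw [prod_image fun x _ y _ h => hi h]
    simp only [tupleLabel_apply hi, optIncr_some]
  · simpa [subset_iff] using hM
  · intro n _ hn
    rw [tupleLabel_eq_none hi (by simpa using hn)]
    rfl

end TupleLabel

theorem sum_mul_ite_exists_perm {r d : ℕ} {f : (Fin r → ℕ) → (Fin r → Fin d) → ℝ}
    (hfsymm : ∀ (σ : Perm (Fin r)) i k, f (i ∘ σ) (k ∘ σ) = f i k)
    {b : Fin r → ℕ} (hb : Injective b) (kb : Fin r → Fin d) {T : Finset (Fin r → ℕ)}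
    (hT : ∀ σ : Perm (Fin r), b ∘ σ ∈ T) :
    ∑ i ∈ T, ∑ k, f i k * (if ∃ σ : Perm (Fin r), i = b ∘ σ ∧ k = kb ∘ σ then 1 else 0)
      = r.factorial * f b kb := by
  classical
  set S := univ.image fun σ : Perm (Fin r) => (b ∘ σ, kb ∘ σ)
  have hmem : ∀ i k, (∃ σ : Perm (Fin r), i = b ∘ σ ∧ k = kb ∘ σ) ↔ (i, k) ∈ S := by
    simp [S, eq_comm]
  have hST : S ⊆ T ×ˢ univ := by
    simp [S, subset_iff, hT]
  calc ∑ i ∈ T, ∑ k, f i k * (if ∃ σ : Perm (Fin r), i = b ∘ σ ∧ k = kb ∘ σ then 1 else 0)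
      = ∑ p ∈ T ×ˢ univ, if p ∈ S then f p.1 p.2 else 0 := by
        simp only [sum_product, hmem, mul_ite, mul_one, mul_zero]
    _ = ∑ p ∈ S, f p.1 p.2 := by rw [sum_ite_mem, inter_eq_right.2 hST]
    _ = ∑ σ : Perm (Fin r), f (b ∘ σ) (kb ∘ σ) :=
        sum_image fun σ _ τ _ h => Equiv.ext fun t => hb (congrFun (congrArg Prod.fst h) t)
    _ = r.factorial * f b kb := by simp [hfsymm, Fintype.card_perm]

theorem multInt_eq_sum {Ω : Type*} {d r : ℕ} (Y : ℕ → Ω → Fin d → ℝ)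
    {f : (Fin r → ℕ) → (Fin r → Fin d) → ℝ} (hfΔ : ∀ i k, ¬Injective i → f i k = 0) {M : ℕ}
    (hsupp : ∀ i k, (∃ t, M ≤ i t) → f i k = 0) (ω : Ω) :
    multInt d r Y f ω
      = ∑ i ∈ Fintype.piFinset fun _ => range M, ∑ k, f i k * ∏ t, Y (i t) ω (k t) := by
  have hterm : ∀ i k,
      (if Injective i then f i k * ∏ t, Y (i t) ω (k t) else 0) = f i k * ∏ t, Y (i t) ω (k t) :=
    fun i k => by split_ifs with hi <;> simp [hfΔ i k, hi]
  simp only [multInt, hterm, tsum_fintype]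
  refine tsum_eq_sum fun i hi => sum_eq_zero fun k _ => ?_
  simp only [Fintype.mem_piFinset, mem_range, not_forall, not_lt] at hi
  simp [hsupp i k hi]

structure IsNormalMartingaleIncrement {Ω : Type*} [mΩ : MeasurableSpace Ω] {d : ℕ}
    (μ : Measure Ω) (F : ℕ → MeasurableSpace Ω) (Y : ℕ → Ω → Fin d → ℝ) : Prop where
  le : ∀ n, F n ≤ mΩ
  mono : Monotone F
  adapted : ∀ n i, Measurable[F n] fun ω => Y n ω i
  bdd : ∀ n, ∃ C, ∀ ω i, |Y n ω i| ≤ C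
  condExp_eq_zero : ∀ n i, μ[fun ω => Y n ω i | Fprev F n] =ᵐ[μ] fun _ => 0
  condExp_mul : ∀ n i j, μ[fun ω => Y n ω i * Y n ω j | Fprev F n] =ᵐ[μ]
    fun _ => if i = j then (1 : ℝ) else 0

namespace IsNormalMartingaleIncrement

variable {Ω : Type*} [mΩ : MeasurableSpace Ω] {μ : Measure Ω} {d : ℕ}
  {F : ℕ → MeasurableSpace Ω} {Y : ℕ → Ω → Fin d → ℝ}

theorem memLp_top (hY : IsNormalMartingaleIncrement μ F Y) (n : ℕ) (κ : Fin d) :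
    MemLp (fun ω => Y n ω κ) ∞ μ := by
  obtain ⟨C, hC⟩ := hY.bdd n
  exact memLp_top_of_bound ((hY.adapted n κ).mono (hY.le n) le_rfl).aestronglyMeasurable C
    (ae_of_all _ fun ω => hC ω κ)

theorem memLp_top_optIncr [IsFiniteMeasure μ] (hY : IsNormalMartingaleIncrement μ F Y) (n : ℕ)
    (o : Option (Fin d)) :
    MemLp (fun ω => optIncr Y n ω o) ∞ μ := by
  cases o with
  | none => exact memLp_const 1
  | some κ => exact hY.memLp_top n κ

theorem memLp_top_prod (hY : IsNormalMartingaleIncrement μ F Y) {r : ℕ} (i : Fin r → ℕ)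
    (k : Fin r → Fin d) : MemLp (fun ω => ∏ t, Y (i t) ω (k t)) ∞ μ :=
  memLp_top_finset_prod fun t _ => hY.memLp_top (i t) (k t)

theorem measurable_optIncr (hY : IsNormalMartingaleIncrement μ F Y) {n M : ℕ} (h : n < M)
    (o : Option (Fin d)) : Measurable[Fprev F M] fun ω => optIncr Y n ω o := by
  cases o with
  | none => exact measurable_const
  | some κ => exact (hY.adapted n κ).mono (le_Fprev_of_lt hY.mono h) le_rfl

theorem condExp_optIncr_mul [IsFiniteMeasure μ] (hY : IsNormalMartingaleIncrement μ F Y) (n : ℕ)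
    (a b : Option (Fin d)) :
    μ[fun ω => optIncr Y n ω a * optIncr Y n ω b | Fprev F n] =ᵐ[μ]
      fun _ => if a = b then (1 : ℝ) else 0 := by
  cases a <;> cases b
  · simp [optIncr, condExp_const (Fprev_le hY.le n)]
  · simpa [optIncr] using hY.condExp_eq_zero n _
  · simpa [optIncr] using hY.condExp_eq_zero n _
  · simpa [optIncr] using hY.condExp_mul n _ _

theorem integral_prod_optIncr_mul [IsProbabilityMeasure μ]
    (hY : IsNormalMartingaleIncrement μ F Y) (M : ℕ) (α β : ℕ → Option (Fin d)) :
    ∫ ω, ∏ n ∈ range M, optIncr Y n ω (α n) * optIncr Y n ω (β n) ∂μ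
      = ∏ n ∈ range M, if α n = β n then (1 : ℝ) else 0 := by
  induction M with
  | zero => simp
  | succ M ih =>
    have hX : Measurable[Fprev F M]
        fun ω => ∏ n ∈ range M, optIncr Y n ω (α n) * optIncr Y n ω (β n) :=
      measurable_prod _ fun n hn =>
        (hY.measurable_optIncr (mem_range.1 hn) _).mul (hY.measurable_optIncr (mem_range.1 hn) _)
    have hXm : MemLp (fun ω => ∏ n ∈ range M, optIncr Y n ω (α n) * optIncr Y n ω (β n)) ∞ μ :=
      memLp_top_finset_prod fun n _ => (hY.memLp_top_optIncr n _).mul' (hY.memLp_top_optIncr n _)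
    have hZm : MemLp (fun ω => optIncr Y M ω (α M) * optIncr Y M ω (β M)) ∞ μ :=
      (hY.memLp_top_optIncr M _).mul' (hY.memLp_top_optIncr M _)
    simp only [prod_range_succ]
    rw [integral_mul_eq_of_condExp_ae_eq_const (Fprev_le hY.le M) hX.stronglyMeasurable
      (hZm.integrable le_top) ((hZm.mul' (r := ∞) hXm).integrable le_top)
      (hY.condExp_optIncr_mul M _ _), ih, mul_comm]

theorem integral_prod_mul_prod [IsProbabilityMeasure μ] (hY : IsNormalMartingaleIncrement μ F Y)
    {r : ℕ} {i b : Fin r → ℕ} (hi : Injective i) (hb : Injective b) (k kb : Fin r → Fin d) :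
    ∫ ω, (∏ t, Y (i t) ω (k t)) * ∏ t, Y (b t) ω (kb t) ∂μ
      = if ∃ σ : Perm (Fin r), i = b ∘ σ ∧ k = kb ∘ σ then 1 else 0 := by
  obtain ⟨M, hM⟩ := Finite.exists_le fun t => i t + b t
  have hiM : ∀ t, i t < M + 1 := fun t => by linarith [hM t]
  have hbM : ∀ t, b t < M + 1 := fun t => by linarith [hM t]
  have hlabel : (∀ n ∈ range (M + 1), tupleLabel i k n = tupleLabel b kb n) ↔
      tupleLabel i k = tupleLabel b kb := by
    refine ⟨fun h => funext fun n => ?_, fun h n _ => h ▸ rfl⟩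
    by_cases hn : n < M + 1
    · exact h n (mem_range.2 hn)
    · rw [tupleLabel_eq_none hi fun ⟨t, ht⟩ => hn (ht ▸ hiM t),
        tupleLabel_eq_none hb fun ⟨t, ht⟩ => hn (ht ▸ hbM t)]
  simp_rw [← prod_optIncr_tupleLabel Y _ hi hiM, ← prod_optIncr_tupleLabel Y _ hb hbM,
    ← prod_mul_distrib]
  rw [hY.integral_prod_optIncr_mul, prod_boole]
  simp only [hlabel, tupleLabel_eq_iff hi hb]

theorem memLp_top_multInt (hY : IsNormalMartingaleIncrement μ F Y) {r : ℕ}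
    {f : (Fin r → ℕ) → (Fin r → Fin d) → ℝ} (hfΔ : ∀ i k, ¬Injective i → f i k = 0) {M : ℕ}
    (hsupp : ∀ i k, (∃ t, M ≤ i t) → f i k = 0) : MemLp (multInt d r Y f) ∞ μ := by
  rw [funext (multInt_eq_sum Y hfΔ hsupp)]
  exact memLp_finsetSum _ fun i _ => memLp_finsetSum _ fun k _ =>
    (hY.memLp_top_prod i k).const_mul (f i k)

theorem stronglyMeasurable_multInt (hY : IsNormalMartingaleIncrement μ F Y) {r : ℕ}
    {f : (Fin r → ℕ) → (Fin r → Fin d) → ℝ} (hfΔ : ∀ i k, ¬Injective i → f i k = 0) {N : ℕ}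
    (hf : ∀ i k, f i k ≠ 0 → ∀ t, i t ≤ N) : StronglyMeasurable[F N] (multInt d r Y f) := by
  have hsupp : ∀ i k, (∃ t, N + 1 ≤ i t) → f i k = 0 := fun i k ⟨t, ht⟩ => by
    by_contra hik
    exact absurd (hf i k hik t) (by omega)
  rw [funext (multInt_eq_sum Y hfΔ hsupp)]
  refine Measurable.stronglyMeasurable <| Finset.measurable_sum _ fun i hi =>
    Finset.measurable_sum _ fun k _ => (Finset.measurable_prod _ fun t _ => ?_).const_mul _
  have hit : i t ≤ N := Nat.lt_succ_iff.1 (mem_range.1 (Fintype.mem_piFinset.1 hi t))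
  exact (hY.adapted (i t) (k t)).mono (hY.mono hit) le_rfl

theorem integral_multInt_mul_prod [IsProbabilityMeasure μ]
    (hY : IsNormalMartingaleIncrement μ F Y) {r : ℕ} {f : (Fin r → ℕ) → (Fin r → Fin d) → ℝ}
    (hfsymm : ∀ (σ : Perm (Fin r)) i k, f (i ∘ σ) (k ∘ σ) = f i k)
    (hfΔ : ∀ i k, ¬Injective i → f i k = 0) {N : ℕ} (hsupp : ∀ i k, (∃ t, N ≤ i t) → f i k = 0)
    {b : Fin r → ℕ} (hb : Injective b) (kb : Fin r → Fin d) :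
    ∫ ω, multInt d r Y f ω * ∏ t, Y (b t) ω (kb t) ∂μ = r.factorial * f b kb := by
  obtain ⟨M, hM⟩ := Finite.exists_le b
  have hsupp' : ∀ i k, (∃ t, N + M + 1 ≤ i t) → f i k = 0 := fun i k ⟨t, ht⟩ =>
    hsupp i k ⟨t, by omega⟩
  have hterm : ∀ i k, ∫ ω, f i k * (∏ t, Y (i t) ω (k t)) * ∏ t, Y (b t) ω (kb t) ∂μ
      = f i k * if ∃ σ : Perm (Fin r), i = b ∘ σ ∧ k = kb ∘ σ then 1 else 0 := fun i k => by
    by_cases hi : Injective i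
    · simp_rw [mul_assoc]
      rw [integral_const_mul, hY.integral_prod_mul_prod hi hb]
    · simp [hfΔ i k hi]
  have hint : ∀ i k,
      Integrable (fun ω => f i k * (∏ t, Y (i t) ω (k t)) * ∏ t, Y (b t) ω (kb t)) μ :=
    fun i k => (((hY.memLp_top_prod b kb).mul' (r := ∞)
      ((hY.memLp_top_prod i k).const_mul (f i k))).integrable le_top)
  simp_rw [multInt_eq_sum Y hfΔ hsupp', sum_mul]
  rw [integral_finsetSum _ fun i _ => integrable_finsetSum _ fun k _ => hint i k]
  simp_rw [integral_finsetSum _ fun k _ => hint _ k, hterm]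
  refine sum_mul_ite_exists_perm hfsymm hb kb fun σ => ?_
  simp only [Fintype.mem_piFinset, mem_range, comp_apply]
  exact fun t => by linarith [hM (σ t)]

theorem integral_mul_prod_eq_zero [IsFiniteMeasure μ] (hY : IsNormalMartingaleIncrement μ F Y)
    {N : ℕ} {g : Ω → ℝ} (hg : StronglyMeasurable[F N] g) (hgm : MemLp g ∞ μ) {r : ℕ}
    {i : Fin r → ℕ} (hi : Injective i) (k : Fin r → Fin d) {t₀ : Fin r} (ht₀ : N < i t₀) :
    ∫ ω, g ω * ∏ t, Y (i t) ω (k t) ∂μ = 0 := by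
  have : Nonempty (Fin r) := ⟨t₀⟩
  obtain ⟨s, hs⟩ := Finite.exists_max i
  have hX : StronglyMeasurable[Fprev F (i s)]
      fun ω => g ω * ∏ n ∈ range (i s), optIncr Y n ω (tupleLabel i k n) :=
    (hg.mono (le_Fprev_of_lt hY.mono (ht₀.trans_le (hs t₀)))).mul
      (Finset.measurable_prod _ fun n hn =>
        hY.measurable_optIncr (mem_range.1 hn) _).stronglyMeasurable
  have hXm : MemLp (fun ω => g ω * ∏ n ∈ range (i s), optIncr Y n ω (tupleLabel i k n)) ∞ μ :=
    (memLp_top_finset_prod fun n _ => hY.memLp_top_optIncr n _).mul' hgm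
  simp_rw [← prod_optIncr_tupleLabel Y _ hi (fun t => Nat.lt_succ_of_le (hs t)), prod_range_succ,
    tupleLabel_apply hi, optIncr_some, ← mul_assoc]
  rw [integral_mul_eq_of_condExp_ae_eq_const (Fprev_le hY.le _) hX
    ((hY.memLp_top _ _).integrable le_top)
    (((hY.memLp_top _ _).mul' (r := ∞) hXm).integrable le_top) (hY.condExp_eq_zero _ _), zero_mul]

end IsNormalMartingaleIncrement

theorem stmt_5_general {Ω : Type*} [m : MeasurableSpace Ω] (μ : Measure Ω) [IsProbabilityMeasure μ]
    (d : ℕ) (F : ℕ → MeasurableSpace Ω) (hFle : ∀ n, F n ≤ m) (hFmono : Monotone F)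
    (Y : ℕ → Ω → Fin d → ℝ)
    (hYadp : ∀ n i, Measurable[F n] fun ω => Y n ω i)
    (hYbd : ∀ n, ∃ C, ∀ ω i, |Y n ω i| ≤ C)
    (hY0 : ∀ n i, μ[fun ω => Y n ω i | Fprev F n] =ᵐ[μ] fun _ => 0)
    (hY2 : ∀ n i j, μ[fun ω => Y n ω i * Y n ω j | Fprev F n] =ᵐ[μ]
      fun _ => if i = j then (1 : ℝ) else 0)
    (r : ℕ)
    (f : (Fin r → ℕ) → (Fin r → Fin d) → ℝ)
    (hfsymm : ∀ (σ : Equiv.Perm (Fin r)) i k, f (i ∘ σ) (k ∘ σ) = f i k)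
    (hfΔ : ∀ i k, ¬Function.Injective i → f i k = 0)
    (hfsupp : ∃ N, ∀ i k, (∃ t, N ≤ i t) → f i k = 0)
    (N : ℕ) :
    AEStronglyMeasurable[F N] (multInt d r Y f) μ ↔
      ∀ i k, f i k ≠ 0 → ∀ t, i t ≤ N := by
  have hY : IsNormalMartingaleIncrement μ F Y := ⟨hFle, hFmono, hYadp, hYbd, hY0, hY2⟩
  refine ⟨fun ⟨g, hg, hIg⟩ i k hik t => ?_,
    fun h => (hY.stronglyMeasurable_multInt hfΔ h).aestronglyMeasurable⟩
  obtain ⟨N₀, hN₀⟩ := hfsupp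
  by_contra hlt
  have hi : Injective i := not_imp_comm.1 (hfΔ i k) hik
  have hpair := hY.integral_multInt_mul_prod hfsymm hfΔ hN₀ hi k
  have hzero := hY.integral_mul_prod_eq_zero hg ((hY.memLp_top_multInt hfΔ hN₀).ae_eq hIg) hi k
    (not_le.1 hlt)
  have hcongr : ∫ ω, multInt d r Y f ω * ∏ t, Y (i t) ω (k t) ∂μ
      = ∫ ω, g ω * ∏ t, Y (i t) ω (k t) ∂μ := integral_congr_ae (hIg.mul (ae_eq_refl _))
  rw [hcongr, hzero] at hpair
  exact hik ((mul_eq_zero.1 hpair.symm).resolve_left (Nat.cast_ne_zero.2 r.factorial_ne_zero))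

/-- for `r ≥ 1`, `I^r(f)` is `F_N`-measurable if and only if
`f 1_{[0,N]^r} = f` (i.e. `f` is supported on tuples with all entries `≤ N`). -/
theorem stmt_5 {Ω : Type*} [m : MeasurableSpace Ω] (μ : Measure Ω) [IsProbabilityMeasure μ]
    (d : ℕ) (F : ℕ → MeasurableSpace Ω) (hFle : ∀ n, F n ≤ m) (hFmono : Monotone F)
    (Y : ℕ → Ω → Fin d → ℝ)
    (hYadp : ∀ n i, Measurable[F n] fun ω => Y n ω i)
    (hYbd : ∀ n, ∃ C, ∀ ω i, |Y n ω i| ≤ C)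
    (hY0 : ∀ n i, μ[fun ω => Y n ω i | Fprev F n] =ᵐ[μ] fun _ => 0)
    (hY2 : ∀ n i j, μ[fun ω => Y n ω i * Y n ω j | Fprev F n] =ᵐ[μ]
      fun _ => if i = j then (1 : ℝ) else 0)
    (r : ℕ) (hr : 1 ≤ r)
    (f : (Fin r → ℕ) → (Fin r → Fin d) → ℝ)
    (hfsymm : ∀ (σ : Equiv.Perm (Fin r)) i k, f (i ∘ σ) (k ∘ σ) = f i k)
    (hfΔ : ∀ i k, ¬Function.Injective i → f i k = 0)
    (hfsupp : ∃ N, ∀ i k, (∃ t, N ≤ i t) → f i k = 0)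
    (N : ℕ) :
    AEStronglyMeasurable[F N] (multInt d r Y f) μ ↔
      ∀ i k, f i k ≠ 0 → ∀ t, i t ≤ N :=
  stmt_5_general (m := m) μ d F hFle hFmono Y hYadp hYbd hY0 hY2 r f hfsymm hfΔ hfsupp N

end
end

section
/- Let (Y_n) be a normal martingale increment sequence in R^d whose filtration (F_n) has multiplicity d+1 (each atom of F_n splits into d+1 atoms of F_{n+1} of positive probability). Then for each n, L⁰(Ω, F_n) has dimension (d+1)^{n+1}, and the family { Y_{i_1}^{k_1} ··· Y_{i_r}^{k_r} : 0 ≤ i_1 < ... < i_r ≤ n, 1 ≤ k_1,...,k_r ≤ d, 0 ≤ r ≤ n+1 } forms an orthonormal basis of L²(Ω, F_n). Consequently L⁰(Ω, F_n) ⊂ H_0 ⊕ ... ⊕ H_{n+1}, where H_r is the r-th chaos. -/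
open MeasureTheory Finset ProbabilityTheory

noncomputable section

/-- The σ-algebra generated by the first `n+1` coordinates of the canonical space
`Ω = {0,…,d}^ℕ`. -/
def coordFilt (d n : ℕ) : MeasurableSpace (ℕ → Fin (d + 1)) :=
  MeasurableSpace.comap (fun ω (k : Fin (n + 1)) => ω k) inferInstance

/-- The product `Y_{i_1}^{k_1} ⋯ Y_{i_r}^{k_r}` attached to the index
`P = (r, (i_1,…,i_r), (k_1,…,k_r))`, where `Y_n(ω) = v_n(ω_n)`. -/
def basisProd (d n : ℕ) (v : ℕ → Fin (d + 1) → Fin d → ℝ)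
    (P : Σ r : Fin (n + 2), (Fin (r : ℕ) → Fin (n + 1)) × (Fin (r : ℕ) → Fin d))
    (ω : ℕ → Fin (d + 1)) : ℝ :=
  ∏ u, v (P.2.1 u) (ω (P.2.1 u)) (P.2.2 u)

/-!
Everything happens on the cube `{0,…,d}^{n+1}` of the first `n+1` coordinates. By independence,
the law of these coordinates is the product weight `w x = ∏ₖ p_k(x_k)`, so integrals of
`F_n`-measurable functions are weighted sums over the cube. At each time `k` the `d+1` functions
`1, v_k(·)_1, …, v_k(·)_d` are orthonormal for `p_k`: this is `∑ p_k = 1`, `E[Y_k] = 0` and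
`E[Y_k ⊗ Y_k] = I_d`. Hence their tensor products are orthonormal for `w`, and these tensor
products are exactly the products `Y_{i_1}^{k_1} ⋯ Y_{i_r}^{k_r}`, the times `i_u` being those where
a non-constant factor is chosen. An orthonormal family is linearly independent, and this one has
`(d+1)^{n+1}` members, the dimension of the space of functions on the cube, so it is a basis of
that space, i.e. of the `F_n`-measurable functions.
-/

open Function

namespace ObtuseRandomWalk

def WeightedOrthonormal {X I : Type*} [Fintype X] [DecidableEq I] (w : X → ℝ) (e : I → X → ℝ) :
    Prop :=
  ∀ i j, ∑ x, w x * (e i x * e j x) = if i = j then 1 else 0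

namespace WeightedOrthonormal

variable {X I : Type*} [Fintype X] [Fintype I] [DecidableEq I] {w : X → ℝ} {e : I → X → ℝ}

theorem linearIndependent (he : WeightedOrthonormal w e) : LinearIndependent ℝ e := by
  refine Fintype.linearIndependent_iff.mpr fun c hc j => ?_
  calc c j = ∑ i, c i * ∑ x, w x * (e i x * e j x) := by simp [he _ _, mul_ite]
    _ = ∑ x, w x * ((∑ i, c i • e i) x * e j x) := by
      simp only [Finset.sum_apply, Pi.smul_apply, smul_eq_mul, Finset.mul_sum, Finset.sum_mul]
      rw [Finset.sum_comm]
      exact Finset.sum_congr rfl fun x _ => Finset.sum_congr rfl fun i _ => by ring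
    _ = 0 := by simp only [hc, Pi.zero_apply, zero_mul, mul_zero, Finset.sum_const_zero]

theorem exists_eq_sum (he : WeightedOrthonormal w e)
    (hcard : Fintype.card I = Fintype.card X) (F : X → ℝ) :
    ∃ c : I → ℝ, ∀ x, F x = ∑ i, c i * e i x := by
  have hspan := he.linearIndependent.span_eq_top_of_card_eq_finrank'
    (hcard.trans (Module.finrank_fintype_fun_eq_card ℝ).symm)
  obtain ⟨c, hc⟩ :=
    (Submodule.mem_span_range_iff_exists_fun ℝ).mp (hspan ▸ Submodule.mem_top (x := F))
  exact ⟨c, fun x => by simp [← hc]⟩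

end WeightedOrthonormal

theorem weightedOrthonormal_cons_one {α : Type*} [Fintype α] {d : ℕ} {p : α → ℝ}
    {v : α → Fin d → ℝ} (h1 : ∑ a, p a = 1) (h0 : ∀ j, ∑ a, p a * v a j = 0)
    (h2 : ∀ j l, ∑ a, p a * v a j * v a l = if j = l then 1 else 0) :
    WeightedOrthonormal p (fun c a => (Fin.cons 1 (v a) : Fin (d + 1) → ℝ) c) := by
  intro c c'
  induction c using Fin.cases <;> induction c' using Fin.cases <;>
    simp [h1, h0, ← mul_assoc, h2, (Fin.succ_ne_zero _).symm, Fin.succ_ne_zero]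

section Tensor

variable {ι α β : Type*} [Fintype ι]

def productWeight (p : ι → α → ℝ) (x : ι → α) : ℝ := ∏ k, p k (x k)

theorem productWeight_nonneg {p : ι → α → ℝ} (hp : ∀ k a, 0 ≤ p k a) (x : ι → α) :
    0 ≤ productWeight p x :=
  prod_nonneg fun k _ => hp k (x k)

def tensorFamily (E : ι → β → α → ℝ) (f : ι → β) (x : ι → α) : ℝ := ∏ k, E k (f k) (x k)

theorem weightedOrthonormal_tensorFamily [DecidableEq ι] [Fintype α] [DecidableEq β]
    {p : ι → α → ℝ} {E : ι → β → α → ℝ}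
    (hE : ∀ k, WeightedOrthonormal (p k) (E k)) :
    WeightedOrthonormal (productWeight p) (tensorFamily E) := by
  intro f g
  calc ∑ x : ι → α, productWeight p x * (tensorFamily E f x * tensorFamily E g x)
      = ∑ x : ι → α, ∏ k, p k (x k) * (E k (f k) (x k) * E k (g k) (x k)) := by
        simp only [productWeight, tensorFamily, Finset.prod_mul_distrib]
    _ = ∏ k, ∑ a, p k a * (E k (f k) a * E k (g k) a) :=
        (Fintype.prod_sum fun k a => p k a * (E k (f k) a * E k (g k) a)).symm
    _ = if f = g then 1 else 0 := by simp only [hE _ _, Fintype.prod_boole, funext_iff]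

end Tensor

section Canonical

variable {κ ι α : Type*} [MeasurableSpace α] [MeasurableSingletonClass α] {μ : Measure (κ → α)}
  {p : κ → α → ℝ}

theorem sum_eq_one_of_measure_coord_eq [Fintype α] [IsProbabilityMeasure μ]
    (hp : ∀ k a, 0 ≤ p k a) (hmarg : ∀ k a, μ {ω | ω k = a} = ENNReal.ofReal (p k a)) (k : κ) :
    ∑ a, p k a = 1 := by
  have h := sum_measure_preimage_singleton (μ := μ) univ (f := fun ω => ω k)
    fun a _ => measurable_pi_apply k (measurableSet_singleton a)
  simp only [Set.preimage, Set.mem_singleton_iff, hmarg, coe_univ, Set.mem_univ,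
    Set.ofPred_true, measure_univ] at h
  rwa [← ENNReal.ofReal_sum_of_nonneg fun a _ => hp k a, ENNReal.ofReal_eq_one] at h

theorem measure_comp_preimage_singleton [Fintype ι] (hp : ∀ k a, 0 ≤ p k a)
    (hmarg : ∀ k a, μ {ω | ω k = a} = ENNReal.ofReal (p k a))
    (hindep : iIndepFun (fun k (ω : κ → α) => ω k) μ) {g : ι → κ} (hg : Injective g)
    (x : ι → α) :
    μ ((· ∘ g) ⁻¹' {x}) = ENNReal.ofReal (productWeight (fun i => p (g i)) x) := by
  have hcyl : (· ∘ g) ⁻¹' {x} = ⋂ i ∈ (univ : Finset ι), (fun ω : κ → α => ω (g i)) ⁻¹' {x i} := by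
    ext ω
    simp [funext_iff]
  rw [hcyl,
    (hindep.precomp hg).measure_inter_preimage_eq_mul _ fun i _ => measurableSet_singleton _,
    productWeight, ENNReal.ofReal_prod_of_nonneg fun i _ => hp _ _]
  exact Finset.prod_congr rfl fun i _ => hmarg _ _

theorem integral_comp_eq_sum [Fintype ι] [DecidableEq ι] [Fintype α] [IsFiniteMeasure μ]
    (hp : ∀ k a, 0 ≤ p k a) (hmarg : ∀ k a, μ {ω | ω k = a} = ENNReal.ofReal (p k a))
    (hindep : iIndepFun (fun k (ω : κ → α) => ω k) μ) {g : ι → κ} (hg : Injective g)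
    (F : (ι → α) → ℝ) :
    ∫ ω, F (ω ∘ g) ∂μ = ∑ x, productWeight (fun i => p (g i)) x * F x := by
  have hmeas : Measurable fun ω : κ → α => ω ∘ g := by fun_prop
  rw [← integral_map hmeas.aemeasurable Measurable.of_discrete.aestronglyMeasurable,
    integral_fintype .of_finite]
  refine Finset.sum_congr rfl fun x _ => ?_
  rw [map_measureReal_apply hmeas (measurableSet_singleton x), measureReal_def,
    measure_comp_preimage_singleton hp hmarg hindep hg, ENNReal.toReal_ofReal
      (productWeight_nonneg (fun i => hp (g i)) x), smul_eq_mul]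

end Canonical

section Encoding

variable {d n : ℕ}

abbrev ChaosIndex (d n : ℕ) :=
  Σ r : Fin (n + 2), (Fin (r : ℕ) → Fin (n + 1)) × (Fin (r : ℕ) → Fin d)

/-- The index `(r, i, k)` seen as the function taking the value `k_u + 1` at time `i_u` and `0`
at the other times. -/
def ChaosIndex.toFun (P : ChaosIndex d n) : Fin (n + 1) → Fin (d + 1) :=
  extend P.2.1 (fun u => (P.2.2 u).succ) 0

namespace ChaosIndex

theorem toFun_apply_index {P : ChaosIndex d n} (hP : StrictMono P.2.1) (u : Fin P.1) :
    P.toFun (P.2.1 u) = (P.2.2 u).succ :=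
  hP.injective.extend_apply _ _ _

theorem toFun_apply_of_notMem_range {P : ChaosIndex d n} {k : Fin (n + 1)}
    (hk : k ∉ Set.range P.2.1) : P.toFun k = 0 :=
  extend_apply' _ _ _ hk

theorem toFun_ne_zero_iff {P : ChaosIndex d n} (hP : StrictMono P.2.1) (k : Fin (n + 1)) :
    P.toFun k ≠ 0 ↔ k ∈ Set.range P.2.1 := by
  refine ⟨fun h => ?_, ?_⟩
  · by_contra hk
    exact h (toFun_apply_of_notMem_range hk)
  · rintro ⟨u, rfl⟩
    rw [toFun_apply_index hP]
    exact Fin.succ_ne_zero _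

theorem toFun_inj {P Q : ChaosIndex d n} (hP : StrictMono P.2.1) (hQ : StrictMono Q.2.1) :
    P.toFun = Q.toFun ↔ P = Q := by
  refine ⟨fun h => ?_, congrArg _⟩
  have hrange : Set.range P.2.1 = Set.range Q.2.1 := by
    ext k
    rw [← toFun_ne_zero_iff hP, ← toFun_ne_zero_iff hQ, h]
  obtain ⟨⟨r, hr⟩, ι, κ⟩ := P
  obtain ⟨⟨r', hr'⟩, ι', κ'⟩ := Q
  obtain rfl : r = r' := by
    simpa [Set.ncard_range_of_injective hP.injective, Set.ncard_range_of_injective hQ.injective]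
      using congrArg Set.ncard hrange
  obtain rfl : ι = ι' := hP.range_inj hQ |>.mp hrange
  obtain rfl : κ = κ' := funext fun u => Fin.succ_injective _ <| by
    rw [← toFun_apply_index hP, ← toFun_apply_index hQ, h]
  rfl

theorem toFun_surjective (f : Fin (n + 1) → Fin (d + 1)) :
    ∃ P : ChaosIndex d n, StrictMono P.2.1 ∧ P.toFun = f := by
  classical
  set s := univ.filter (f · ≠ 0)
  have hs : s.card < n + 2 := Nat.lt_succ_of_le ((card_filter_le _ _).trans_eq (card_fin _))
  set ι := s.orderEmbOfFin rfl
  have hι : ∀ u, f (ι u) ≠ 0 := fun u => (mem_filter.mp (s.orderEmbOfFin_mem rfl u)).2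
  set P : ChaosIndex d n := ⟨⟨s.card, hs⟩, ι, fun u => (f (ι u)).pred (hι u)⟩
  refine ⟨P, ι.strictMono, funext fun k => ?_⟩
  by_cases hk : k ∈ Set.range ι
  · obtain ⟨u, rfl⟩ := hk
    exact (toFun_apply_index (P := P) ι.strictMono u).trans (Fin.succ_pred _ (hι u))
  · have : k ∉ (s : Set (Fin (n + 1))) := by rwa [← s.range_orderEmbOfFin rfl]
    rw [toFun_apply_of_notMem_range hk, eq_comm]
    simpa [s] using this

end ChaosIndex

def strictMonoEquiv (d n : ℕ) :
    {P : ChaosIndex d n // StrictMono P.2.1} ≃ (Fin (n + 1) → Fin (d + 1)) :=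
  Equiv.ofBijective (fun P => P.1.toFun)
    ⟨fun P Q h => Subtype.ext ((ChaosIndex.toFun_inj P.2 Q.2).mp h),
      fun f => let ⟨P, hP, hf⟩ := ChaosIndex.toFun_surjective f; ⟨⟨P, hP⟩, hf⟩⟩

theorem card_strictMono :
    Fintype.card {P : ChaosIndex d n // StrictMono P.2.1} = (d + 1) ^ (n + 1) := by
  simp [Fintype.card_congr (strictMonoEquiv d n)]

theorem toFun_strictMonoEquiv_symm (f : Fin (n + 1) → Fin (d + 1)) :
    ((strictMonoEquiv d n).symm f).1.toFun = f :=
  (strictMonoEquiv d n).apply_symm_apply f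

theorem strictMonoEquiv_symm_toFun {P : ChaosIndex d n} (hP : StrictMono P.2.1) :
    ((strictMonoEquiv d n).symm P.toFun).1 = P :=
  congrArg Subtype.val ((strictMonoEquiv d n).symm_apply_apply ⟨P, hP⟩)

def coordBasis (v : ℕ → Fin (d + 1) → Fin d → ℝ) (k : Fin (n + 1)) (c a : Fin (d + 1)) : ℝ :=
  (Fin.cons 1 (v k a) : Fin (d + 1) → ℝ) c

theorem basisProd_eq_tensorFamily (v : ℕ → Fin (d + 1) → Fin d → ℝ) {P : ChaosIndex d n}
    (hP : StrictMono P.2.1) (ω : ℕ → Fin (d + 1)) :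
    basisProd d n v P ω = tensorFamily (coordBasis v) P.toFun (ω ∘ Fin.val) :=
  Fintype.prod_of_injective P.2.1 hP.injective _ _
    (fun k hk => by simp [coordBasis, ChaosIndex.toFun_apply_of_notMem_range hk])
    (fun u => by simp [coordBasis, ChaosIndex.toFun_apply_index hP])

theorem sum_mul_ite_basisProd (v : ℕ → Fin (d + 1) → Fin d → ℝ) (coef : ChaosIndex d n → ℝ)
    (ω : ℕ → Fin (d + 1)) :
    ∑ P, coef P * (if StrictMono P.2.1 then basisProd d n v P ω else 0) =
      ∑ f, coef ((strictMonoEquiv d n).symm f).1 *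
        tensorFamily (coordBasis v) f (ω ∘ Fin.val) := by
  simp only [mul_ite, mul_zero]
  rw [← Finset.sum_filter, Finset.sum_subtype _ (p := fun P : ChaosIndex d n => StrictMono P.2.1)
    (fun _ => by simp), ← (strictMonoEquiv d n).sum_comp]
  refine Finset.sum_congr rfl fun P _ => ?_
  rw [Equiv.symm_apply_apply, basisProd_eq_tensorFamily v P.2]
  rfl

end Encoding

end ObtuseRandomWalk

open ObtuseRandomWalk

/-- for an obtuse random walk (canonical model, multiplicity `d+1`),
the family `{Y_{i_1}^{k_1}⋯Y_{i_r}^{k_r} : 0 ≤ i_1 < … < i_r ≤ n, r ≤ n+1}` is an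
orthonormal basis of `L²(Ω, F_n)`: it is orthonormal, has `(d+1)^{n+1}` members
(the dimension of `L⁰(Ω,F_n)`), spans every `F_n`-measurable functional
(hence `L⁰(Ω,F_n) ⊂ H_0 ⊕ … ⊕ H_{n+1}`), and is linearly independent. -/
theorem stmt_6 (d : ℕ) (μ : Measure (ℕ → Fin (d + 1))) [IsProbabilityMeasure μ]
    (p : ℕ → Fin (d + 1) → ℝ) (v : ℕ → Fin (d + 1) → Fin d → ℝ)
    (hp : ∀ k a, 0 < p k a)
    (hmarg : ∀ k a, μ {ω | ω k = a} = ENNReal.ofReal (p k a))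
    (hindep : iIndepFun (fun k (ω : ℕ → Fin (d + 1)) => ω k) μ)
    (hv0 : ∀ k j, ∑ a, p k a * v k a j = 0)
    (hv2 : ∀ k j l, ∑ a, p k a * v k a j * v k a l = if j = l then (1 : ℝ) else 0)
    (n : ℕ) :
    (∀ P Q : Σ r : Fin (n + 2), (Fin (r : ℕ) → Fin (n + 1)) × (Fin (r : ℕ) → Fin d),
        StrictMono P.2.1 → StrictMono Q.2.1 →
        ∫ ω, basisProd d n v P ω * basisProd d n v Q ω ∂μ = if P = Q then 1 else 0) ∧
      (Fintype.card
          {P : Σ r : Fin (n + 2), (Fin (r : ℕ) → Fin (n + 1)) × (Fin (r : ℕ) → Fin d) //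
            StrictMono P.2.1} = (d + 1) ^ (n + 1)) ∧
      (∀ G : (ℕ → Fin (d + 1)) → ℝ, Measurable[coordFilt d n] G →
        ∃ coef : (Σ r : Fin (n + 2), (Fin (r : ℕ) → Fin (n + 1)) × (Fin (r : ℕ) → Fin d)) → ℝ,
          ∀ ω, G ω = ∑ P, coef P * (if StrictMono P.2.1 then basisProd d n v P ω else 0)) ∧
      (∀ coef : (Σ r : Fin (n + 2), (Fin (r : ℕ) → Fin (n + 1)) × (Fin (r : ℕ) → Fin d)) → ℝ,
        (∀ ω, ∑ P, coef P * (if StrictMono P.2.1 then basisProd d n v P ω else 0) = 0) →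
        ∀ P, StrictMono P.2.1 → coef P = 0) := by
  have hp' : ∀ k a, 0 ≤ p k a := fun k a => (hp k a).le
  have hsum := sum_eq_one_of_measure_coord_eq hp' hmarg
  have hON : WeightedOrthonormal (productWeight fun k : Fin (n + 1) => p k)
      (tensorFamily (coordBasis v)) :=
    weightedOrthonormal_tensorFamily fun k => weightedOrthonormal_cons_one (hsum k) (hv0 k) (hv2 k)
  have hextend : ∀ x : Fin (n + 1) → Fin (d + 1), extend Fin.val x 0 ∘ Fin.val = x :=
    fun x => extend_comp Fin.val_injective x 0
  refine ⟨fun P Q hP hQ => ?_, card_strictMono, fun G hG => ?_, fun coef hcoef P hP => ?_⟩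
  · simp only [basisProd_eq_tensorFamily v hP, basisProd_eq_tensorFamily v hQ]
    rw [integral_comp_eq_sum hp' hmarg hindep Fin.val_injective
      fun x => tensorFamily (coordBasis v) (ChaosIndex.toFun P) x *
        tensorFamily (coordBasis v) (ChaosIndex.toFun Q) x,
      hON]
    simp only [ChaosIndex.toFun_inj hP hQ]
  · obtain ⟨c, hc⟩ := hON.exists_eq_sum (by simp) fun x => G (extend Fin.val x 0)
    refine ⟨fun P => c (ChaosIndex.toFun P), fun ω => ?_⟩
    simp only [sum_mul_ite_basisProd, toFun_strictMonoEquiv_symm, ← hc]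
    exact hG.factorsThrough (hextend _).symm
  · have hzero : ∑ f, coef ((strictMonoEquiv d n).symm f).1 • tensorFamily (coordBasis v) f = 0 :=
      funext fun x => by
        have h := hcoef (extend Fin.val x 0)
        rw [sum_mul_ite_basisProd, hextend] at h
        simpa using h
    simpa [strictMonoEquiv_symm_toFun hP] using
      Fintype.linearIndependent_iff.mp hON.linearIndependent _ hzero (ChaosIndex.toFun P)

end
end

section
/- For an obtuse random walk with i.i.d. increments, the gradient has the finite-difference representation: for any F: Ω → R and ω ∈ Ω = {0,...,d}^N, D_k^j F(ω) = Σ_{i=0}^d c_i^j(k) F(ω_i^k), where ω_i^k is ω with its k-th coordinate replaced by i. -/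
open MeasureTheory Finset

noncomputable section

/-- The gradient `D_k^j` on the `r`-th chaos. -/
def gradTerm {Ω : Type*} (d : ℕ) (Y : ℕ → Ω → Fin d → ℝ) :
    (r : ℕ) → ((Fin r → ℕ) → (Fin r → Fin d) → ℝ) → Fin d → ℕ → Ω → ℝ
  | 0, _, _, _, _ => 0
  | s + 1, f, j, k, ω =>
      ((s : ℝ) + 1) * multInt d s Y
        (fun i kk => if ∀ u, i u ≠ k then f (Fin.snoc i k) (Fin.snoc kk j) else 0) ω

/-- The symmetrized indicator `1̃_{(s_1,…,s_r)}^{i_1,…,i_r}`. -/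
def symInd (d r : ℕ) (s : Fin r → ℕ) (idx : Fin r → Fin d)
    (a : Fin r → ℕ) (b : Fin r → Fin d) : ℝ :=
  if ∃ σ : Equiv.Perm (Fin r), (∀ u, a u = s (σ u)) ∧ ∀ u, b u = idx (σ u) then
    ((r.factorial : ℝ))⁻¹ else 0

/-! If `k = s t₀`, the integrand defining `D_k^j` of the chaos element `1̃_s^{idx}` is
`[j = idx t₀] / (m + 1)` times the symmetrized indicator of the remaining coordinates
`s ∘ t₀.succAbove`, and a multiple integral of a symmetrized indicator is the corresponding
product of the `Y`'s; so `D_k^j F = [j = idx t₀] ∏_{u ≠ t₀} Y_{s u}^{idx u}`. Replacing `ω_k` by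
`i` changes only the factor `v_k^{idx t₀}(i)` of `F`, so the finite difference equals
`∑_i p_k^i v_k^j(i) v_k^{idx t₀}(i) ∏_{u ≠ t₀} …`, which is the same by orthonormality. If `k`
is not among the `s t`, both sides vanish, the right one because `∑_i c_i^j(k) = 0`. -/

open Equiv

namespace Equiv.Perm

lemma exists_apply_castSucc_eq_succAbove {m : ℕ} (σ : Perm (Fin (m + 1))) :
    ∃ π : Perm (Fin m), ∀ u, σ u.castSucc = (σ (Fin.last m)).succAbove (π u) := by
  set t := σ (Fin.last m)
  -- `τ` fixes `none`; `π` is its restriction to `Fin m`.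
  let τ : Perm (Option (Fin m)) :=
    (finSuccEquiv' (Fin.last m)).symm.trans (σ.trans (finSuccEquiv' t))
  refine ⟨removeNone τ, fun u => ?_⟩
  have hne : σ u.castSucc ≠ t := fun h => (Fin.castSucc_lt_last u).ne (σ.injective h)
  obtain ⟨x, hx⟩ : ∃ x, τ (some u) = some x := by
    refine Option.ne_none_iff_exists'.mp fun h => hne (finSuccEquiv'_eq_none.mp ?_).symm
    simpa [τ] using h
  have hπu : removeNone τ u = x := Option.some_injective _ ((removeNone_some τ ⟨x, hx⟩).trans hx)
  simp only [τ, trans_apply, finSuccEquiv'_symm_some, Fin.succAbove_last] at hx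
  rw [hπu]
  exact finSuccEquiv'_eq_some.mp hx

lemma exists_apply_last_and_castSucc {m : ℕ} (t : Fin (m + 1)) (π : Perm (Fin m)) :
    ∃ σ : Perm (Fin (m + 1)), σ (Fin.last m) = t ∧ ∀ u, σ u.castSucc = t.succAbove (π u) :=
  ⟨(finSuccEquiv' (Fin.last m)).trans (π.optionCongr.trans (finSuccEquiv' t).symm),
    by simp, fun u => by simp [finSuccEquiv'_last_apply_castSucc]⟩

end Equiv.Perm

lemma exists_perm_snoc_iff {α β : Type*} {m : ℕ} {s : Fin (m + 1) → α}
    (hs : Function.Injective s) (idx : Fin (m + 1) → β) (t₀ : Fin (m + 1))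
    (a : Fin m → α) (b : Fin m → β) (j : β) :
    (∃ σ : Perm (Fin (m + 1)),
        (∀ u, (Fin.snoc a (s t₀) : Fin (m + 1) → α) u = s (σ u)) ∧
          ∀ u, (Fin.snoc b j : Fin (m + 1) → β) u = idx (σ u)) ↔
      j = idx t₀ ∧ ∃ π : Perm (Fin m),
        (∀ u, a u = s (t₀.succAbove (π u))) ∧ ∀ u, b u = idx (t₀.succAbove (π u)) := by
  constructor
  · rintro ⟨σ, hσs, hσidx⟩
    have hlast : σ (Fin.last m) = t₀ := hs (by simpa using (hσs (Fin.last m)).symm)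
    obtain ⟨π, hπ⟩ := σ.exists_apply_castSucc_eq_succAbove
    refine ⟨by simpa [hlast] using hσidx (Fin.last m), π, fun u => ?_, fun u => ?_⟩
    · simpa [hπ, hlast] using hσs u.castSucc
    · simpa [hπ, hlast] using hσidx u.castSucc
  · rintro ⟨rfl, π, ha, hb⟩
    obtain ⟨σ, hlast, hσ⟩ := Perm.exists_apply_last_and_castSucc t₀ π
    exact ⟨σ, Fin.lastCases (by simp [hlast]) (by simp [hσ, ha]),
      Fin.lastCases (by simp [hlast]) (by simp [hσ, hb])⟩

section symInd

variable {d r : ℕ} {s : Fin r → ℕ} (idx : Fin r → Fin d)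

lemma symInd_comp_perm (hs : Function.Injective s) (σ : Perm (Fin r)) (b : Fin r → Fin d) :
    symInd d r s idx (s ∘ σ) b = if b = idx ∘ σ then ((r.factorial : ℝ))⁻¹ else 0 := by
  refine if_congr ⟨?_, fun hb => ⟨σ, fun _ => rfl, fun u => congrFun hb u⟩⟩ rfl rfl
  rintro ⟨τ, hτ, hb⟩
  obtain rfl : σ = τ := Equiv.ext fun u => hs (hτ u)
  exact funext hb

lemma symInd_eq_zero_of_not_injective (hs : Function.Injective s) {a : Fin r → ℕ}
    (ha : ¬ Function.Injective a) (b : Fin r → Fin d) : symInd d r s idx a b = 0 := by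
  refine if_neg ?_
  rintro ⟨σ, hσ, -⟩
  exact ha (funext hσ ▸ hs.comp σ.injective)

lemma symInd_snoc_of_forall_ne {m : ℕ} {s : Fin (m + 1) → ℕ} (idx : Fin (m + 1) → Fin d)
    {x : ℕ} (hx : ∀ t, s t ≠ x) (a : Fin m → ℕ) (b : Fin m → Fin d) (j : Fin d) :
    symInd d (m + 1) s idx (Fin.snoc a x) (Fin.snoc b j) = 0 := by
  refine if_neg ?_
  rintro ⟨σ, hσ, -⟩
  exact hx (σ (Fin.last m)) (by simpa using (hσ (Fin.last m)).symm)

lemma symInd_snoc_self {m : ℕ} {s : Fin (m + 1) → ℕ} (hs : Function.Injective s)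
    (idx : Fin (m + 1) → Fin d) (t₀ : Fin (m + 1)) (a : Fin m → ℕ) (b : Fin m → Fin d)
    (j : Fin d) :
    symInd d (m + 1) s idx (Fin.snoc a (s t₀)) (Fin.snoc b j) =
      (if j = idx t₀ then ((m : ℝ) + 1)⁻¹ else 0) *
        symInd d m (s ∘ t₀.succAbove) (idx ∘ t₀.succAbove) a b := by
  unfold symInd
  simp_rw [exists_perm_snoc_iff hs]
  by_cases hj : j = idx t₀
  · simp only [hj, true_and, if_true, Function.comp_apply, Nat.factorial_succ, Nat.cast_mul,
      Nat.cast_succ, mul_inv, mul_ite, mul_zero]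
  · simp [hj]

end symInd

section multInt

variable {Ω : Type*} {d r : ℕ} (Y : ℕ → Ω → Fin d → ℝ) (ω : Ω)

lemma multInt_const_mul (c : ℝ) (f : (Fin r → ℕ) → (Fin r → Fin d) → ℝ) :
    multInt d r Y (fun a b => c * f a b) ω = c * multInt d r Y f ω := by
  simp only [multInt, ← tsum_mul_left, mul_ite, mul_zero, mul_assoc]

lemma multInt_symInd {s : Fin r → ℕ} (hs : Function.Injective s) (idx : Fin r → Fin d) :
    multInt d r Y (symInd d r s idx) ω = ∏ t, Y (s t) ω (idx t) := by
  have hterm : ∀ σ : Perm (Fin r), ∑' b : Fin r → Fin d,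
      (if Function.Injective (s ∘ σ) then
        symInd d r s idx (s ∘ σ) b * ∏ t, Y ((s ∘ σ) t) ω (b t) else 0) =
      ((r.factorial : ℝ))⁻¹ * ∏ t, Y (s t) ω (idx t) := fun σ => by
    rw [tsum_fintype]
    simp_rw [if_pos (hs.comp σ.injective), symInd_comp_perm idx hs, ite_mul, zero_mul,
      sum_ite_eq', mem_univ, if_true]
    exact congrArg _ (Equiv.prod_comp σ fun t => Y (s t) ω (idx t))
  have hsupp : ∀ a ∉ univ.image fun σ : Perm (Fin r) => s ∘ σ, ∑' b : Fin r → Fin d,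
      (if Function.Injective a then symInd d r s idx a b * ∏ t, Y (a t) ω (b t) else 0) = 0 := by
    intro a ha
    have h0 : ∀ b, symInd d r s idx a b = 0 := fun b =>
      if_neg fun ⟨σ, hσ, _⟩ => ha (mem_image.2 ⟨σ, mem_univ _, (funext hσ).symm⟩)
    simp [h0]
  have himage : Function.Injective fun σ : Perm (Fin r) => s ∘ σ := fun σ τ h =>
    Equiv.ext fun u => hs (congrFun h u)
  rw [multInt, tsum_eq_sum hsupp, sum_image himage.injOn, sum_congr rfl fun σ _ => hterm σ,
    sum_const, card_univ, Fintype.card_perm, Fintype.card_fin, nsmul_eq_mul, ← mul_assoc,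
    mul_inv_cancel₀ (by positivity), one_mul]

end multInt

section gradTerm

variable {Ω : Type*} {d : ℕ} (Y : ℕ → Ω → Fin d → ℝ) (ω : Ω)

lemma gradTerm_symInd_of_forall_ne {r : ℕ} {s : Fin r → ℕ} (idx : Fin r → Fin d) {k : ℕ}
    (hk : ∀ t, s t ≠ k) (j : Fin d) : gradTerm d Y r (symInd d r s idx) j k ω = 0 := by
  cases r with
  | zero => rfl
  | succ m => simp [gradTerm, multInt, symInd_snoc_of_forall_ne idx hk]

lemma gradTerm_symInd_self {m : ℕ} {s : Fin (m + 1) → ℕ} (hs : Function.Injective s)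
    (idx : Fin (m + 1) → Fin d) (t₀ : Fin (m + 1)) (j : Fin d) :
    gradTerm d Y (m + 1) (symInd d (m + 1) s idx) j (s t₀) ω =
      if j = idx t₀ then ∏ u, Y (s (t₀.succAbove u)) ω (idx (t₀.succAbove u)) else 0 := by
  set c : ℝ := if j = idx t₀ then ((m : ℝ) + 1)⁻¹ else 0
  have hintegrand : (fun (a : Fin m → ℕ) (b : Fin m → Fin d) => if ∀ u, a u ≠ s t₀ then
      symInd d (m + 1) s idx (Fin.snoc a (s t₀)) (Fin.snoc b j) else 0) =
      fun a b => c * symInd d m (s ∘ t₀.succAbove) (idx ∘ t₀.succAbove) a b := by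
    funext a b
    rw [← symInd_snoc_self hs]
    refine ite_eq_left_iff.mpr fun ha => ?_
    obtain ⟨u, hu⟩ := not_forall_not.mp ha
    refine (symInd_eq_zero_of_not_injective idx hs (fun hinj => ?_) _).symm
    exact (Fin.castSucc_lt_last u).ne (hinj (by simpa using hu))
  have hsucc : Function.Injective (s ∘ t₀.succAbove) := hs.comp Fin.succAbove_right_injective
  simp only [gradTerm, hintegrand, multInt_const_mul, multInt_symInd Y ω hsucc, c]
  split_ifs
  · field_simp
    rfl
  · ring

end gradTerm

lemma prod_apply_update_of_injective {M α β : Type*} [CommMonoid M] [DecidableEq α] {m : ℕ}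
    {s : Fin (m + 1) → α} (hs : Function.Injective s) (f : Fin (m + 1) → β → M) (ω : α → β)
    (t₀ : Fin (m + 1)) (i : β) :
    ∏ t, f t (Function.update ω (s t₀) i (s t)) =
      f t₀ i * ∏ u, f (t₀.succAbove u) (ω (s (t₀.succAbove u))) := by
  rw [Fin.prod_univ_succAbove _ t₀, Function.update_self]
  congr 1
  refine prod_congr rfl fun u _ => ?_
  rw [Function.update_of_ne fun h => Fin.succAbove_ne t₀ u (hs h)]

theorem stmt_12_general (d : ℕ)
    (p : ℕ → Fin (d + 1) → ℝ) (v : ℕ → Fin (d + 1) → Fin d → ℝ)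
    (hv0 : ∀ k j, ∑ a, p k a * v k a j = 0)
    (hv2 : ∀ k j l, ∑ a, p k a * v k a j * v k a l = if j = l then (1 : ℝ) else 0)
    (r : ℕ) (s : Fin r → ℕ) (hs : Function.Injective s) (idx : Fin r → Fin d)
    (k : ℕ) (j : Fin d) (ω : ℕ → Fin (d + 1)) :
    gradTerm d (fun n ω' => v n (ω' n)) r (symInd d r s idx) j k ω =
      ∑ i : Fin (d + 1), p k i * v k i j *
        ∏ t, v (s t) (Function.update ω k i (s t)) (idx t) := by
  by_cases hk : ∃ t₀, s t₀ = k
  · obtain ⟨t₀, rfl⟩ := hk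
    cases r with
    | zero => exact t₀.elim0
    | succ m =>
      simp_rw [gradTerm_symInd_self _ ω hs idx t₀ j,
        prod_apply_update_of_injective hs (fun t a => v (s t) a (idx t)), ← mul_assoc,
        ← sum_mul, hv2, ite_mul, one_mul, zero_mul]
  · push Not at hk
    have hupdate : ∀ i, ∏ t, v (s t) (Function.update ω k i (s t)) (idx t) =
        ∏ t, v (s t) (ω (s t)) (idx t) := fun i =>
      prod_congr rfl fun t _ => by rw [Function.update_of_ne (hk t)]
    simp_rw [gradTerm_symInd_of_forall_ne _ ω idx hk, hupdate, ← sum_mul, hv0, zero_mul]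

/-- finite-difference representation of the gradient on the canonical
space `Ω = {0,…,d}^ℕ` with `Y_n(ω) = v_n(ω_n)` and `c_i^j(k) = p_k^i v_i^j(k)`:
for `F = Y_{s_1}^{i_1}⋯Y_{s_r}^{i_r}` (spanning the chaos), one has
`D_k^j F(ω) = Σ_{i=0}^d c_i^j(k) F(ω_i^k)`. -/
theorem stmt_12 (d : ℕ)
    (p : ℕ → Fin (d + 1) → ℝ) (v : ℕ → Fin (d + 1) → Fin d → ℝ)
    (hp : ∀ k a, 0 < p k a)
    (hv0 : ∀ k j, ∑ a, p k a * v k a j = 0)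
    (hv2 : ∀ k j l, ∑ a, p k a * v k a j * v k a l = if j = l then (1 : ℝ) else 0)
    (r : ℕ) (s : Fin r → ℕ) (hs : Function.Injective s) (idx : Fin r → Fin d)
    (k : ℕ) (j : Fin d) (ω : ℕ → Fin (d + 1)) :
    gradTerm d (fun n ω' => v n (ω' n)) r (symInd d r s idx) j k ω =
      ∑ i : Fin (d + 1), p k i * v k i j *
        ∏ t, v (s t) (Function.update ω k i (s t)) (idx t) :=
  stmt_12_general d p v hv0 hv2 r s hs idx k j ω

end
end

section
/- Clark–Ocone formula: for any F ∈ L²(Ω) measurable with respect to the obtuse random walk, F = E[F] + Σ_{k=0}^∞ ⟨ E[D_k F | F_{k-1}], Y_k ⟩, with convergence in L²(Ω). -/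
/-!
Write `ℱ k` for `Fprev (coordFilt d) k`. It is generated by the finitely many cylinders fixing
the first `k` steps, all of positive measure, so `μ[f | ℱ k] ω` is the average of `f` over the
cylinder of `ω`. By independence of the steps, the integral of `F (update ω k i)` over such a
cylinder is `(p k i)⁻¹` times the integral of `F` over the sub-cylinder where step `k` is `i`.
With the completeness relation `p k b * (1 + ⟪v k a, v k b⟫) = δ a b` of an obtuse system this
gives `⟪μ[D_k F | ℱ k], Y_k⟫ = μ[F | ℱ (k + 1)] - μ[F | ℱ k]` pointwise, so the partial sums
telescope to `μ[F | ℱ N] - 𝔼[F]`. Since the `ℱ k` generate the product σ-algebra, martingale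
convergence in `L²` concludes; it follows from the `L¹` version through `‖h‖₂² ≤ ‖h‖_∞ ‖h‖₁` on
simple approximants and the `L²` contractivity of conditional expectation.
-/

open MeasureTheory Finset ProbabilityTheory Filter

noncomputable section

/-- The finite-difference gradient `D_k^j F(ω) = Σ_i c_i^j(k) F(ω_i^k)`,
`c_i^j(k) = p_k^i v_i^j(k)`. -/
def fdGrad (d : ℕ) (p : ℕ → Fin (d + 1) → ℝ) (v : ℕ → Fin (d + 1) → Fin d → ℝ)
    (F : (ℕ → Fin (d + 1)) → ℝ) (k : ℕ) (j : Fin d) (ω : ℕ → Fin (d + 1)) : ℝ :=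
  ∑ i, p k i * v k i j * F (Function.update ω k i)

open scoped ENNReal Topology

namespace MeasureTheory

variable {α : Type*} {m0 : MeasurableSpace α} {μ : Measure α}

theorem eLpNorm_two_sq_le_eLpNorm_top_mul_eLpNorm_one (h : α → ℝ)
    (hh : AEStronglyMeasurable h μ) : eLpNorm h 2 μ ^ 2 ≤ eLpNorm h ∞ μ * eLpNorm h 1 μ := by
  have hsq : eLpNorm h 2 μ ^ 2 = eLpNorm (fun x => h x * h x) 1 μ := by
    have := eLpNorm_norm_rpow (μ := μ) (p := 1) h (q := 2) two_pos
    rw [one_mul, ENNReal.ofReal_ofNat] at this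
    rw [← ENNReal.rpow_two, ← this]
    exact eLpNorm_congr_norm_ae (.of_forall fun x => by simp [sq])
  rw [hsq]
  simpa using eLpNorm_le_eLpNorm_top_mul_eLpNorm 1 h hh (· * ·) 1
    (.of_forall fun x => by simp [nnnorm_mul])

variable [IsFiniteMeasure μ]

theorem condExp_eq_setAverage {m : MeasurableSpace α} (hm : m ≤ m0) {f : α → ℝ}
    (hf : Integrable f μ) {A : Set α} (hA : MeasurableSet[m] A) (hA0 : μ A ≠ 0) {x : α}
    (hx : ∀ s, MeasurableSet[m] s → x ∈ s → A ⊆ s) :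
    μ[f | m] x = ⨍ y in A, f y ∂μ := by
  have hconst : ∀ y ∈ A, μ[f | m] y = μ[f | m] x := fun y hy =>
    hx _ (stronglyMeasurable_condExp.measurable (measurableSet_singleton _)) rfl hy
  have hint := setIntegral_condExp hm hf hA
  rw [setIntegral_congr_fun (hm _ hA) hconst, setIntegral_const, smul_eq_mul] at hint
  have hAreal : μ.real A ≠ 0 := (ENNReal.toReal_pos hA0 (measure_ne_top μ A)).ne'
  rw [setAverage_eq, ← hint, smul_eq_mul, inv_mul_cancel_left₀ hAreal]

variable {ℱ : Filtration ℕ m0}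

theorem tendsto_eLpNorm_two_condExp_of_memLp_top {g : α → ℝ} (hg : MemLp g ∞ μ)
    (hgmeas : StronglyMeasurable[⨆ n, ℱ n] g) :
    Tendsto (fun n => eLpNorm (μ[g | ℱ n] - g) 2 μ) atTop (𝓝 0) := by
  set c := 2 * eLpNorm g ∞ μ
  have hc : c ≠ ∞ := ENNReal.mul_ne_top ENNReal.ofNat_ne_top hg.eLpNorm_ne_top
  have hsup : ∀ n, eLpNorm (μ[g | ℱ n] - g) ∞ μ ≤ c := fun n => calc
    _ ≤ eLpNorm (μ[g | ℱ n]) ∞ μ + eLpNorm g ∞ μ :=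
      eLpNorm_sub_le integrable_condExp.aestronglyMeasurable hg.1 le_top
    _ ≤ eLpNorm g ∞ μ + eLpNorm g ∞ μ := by gcongr; exact eLpNorm_condExp_le_eLpNorm g le_top
    _ = c := (two_mul _).symm
  have hL1 := ENNReal.Tendsto.const_mul
    ((hg.integrable le_top).tendsto_eLpNorm_condExp hgmeas) (Or.inr hc)
  rw [mul_zero] at hL1
  have hsq : Tendsto (fun n => eLpNorm (μ[g | ℱ n] - g) 2 μ ^ 2) atTop (𝓝 0) :=
    tendsto_of_tendsto_of_tendsto_of_le_of_le tendsto_const_nhds hL1 (fun _ => bot_le) fun n =>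
      (eLpNorm_two_sq_le_eLpNorm_top_mul_eLpNorm_one _
        (integrable_condExp.aestronglyMeasurable.sub hg.1)).trans (by gcongr; exact hsup n)
  have hsqrt := ((ENNReal.continuous_rpow_const (y := (2 : ℕ)⁻¹)).tendsto 0).comp hsq
  simp only [Function.comp_def, ENNReal.pow_rpow_inv_natCast two_ne_zero] at hsqrt
  simpa using hsqrt

theorem MemLp.tendsto_eLpNorm_two_condExp {f : α → ℝ} (hf : MemLp f 2 μ)
    (hℱ : ⨆ n, ℱ n = m0) :
    Tendsto (fun n => eLpNorm (μ[f | ℱ n] - f) 2 μ) atTop (𝓝 0) := by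
  rw [ENNReal.tendsto_nhds_zero]
  intro ε hε
  have hε3 : ε / 3 ≠ 0 := (ENNReal.div_pos hε.ne' ENNReal.ofNat_ne_top).ne'
  obtain ⟨s, hfg, -⟩ := hf.exists_simpleFunc_eLpNorm_sub_lt ENNReal.ofNat_ne_top hε3
  have hgmeas : StronglyMeasurable[⨆ n, ℱ n] s := by rw [hℱ]; exact s.stronglyMeasurable
  generalize hgs : ⇑s = g at hfg hgmeas
  have hg : MemLp g ∞ μ := hgs ▸ s.memLp_top μ
  have hgf : eLpNorm (g - f) 2 μ ≤ ε / 3 := by rw [eLpNorm_sub_comm]; exact hfg.le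
  have hf1 := hf.integrable one_le_two
  have hg1 := hg.integrable le_top
  filter_upwards [ENNReal.tendsto_nhds_zero.1
    (tendsto_eLpNorm_two_condExp_of_memLp_top hg hgmeas) _ (pos_iff_ne_zero.2 hε3)]
    with n hn
  have hsplit : μ[f | ℱ n] - f =ᵐ[μ] μ[f - g | ℱ n] + (μ[g | ℱ n] - g) + (g - f) := by
    filter_upwards [condExp_sub hf1 hg1 (ℱ n)] with x hx
    simp only [Pi.add_apply, Pi.sub_apply] at hx ⊢
    rw [hx]; ring
  have hcond := integrable_condExp (m := ℱ n) (μ := μ) (f := g) |>.aestronglyMeasurable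
  calc eLpNorm (μ[f | ℱ n] - f) 2 μ
      = eLpNorm (μ[f - g | ℱ n] + (μ[g | ℱ n] - g) + (g - f)) 2 μ := eLpNorm_congr_ae hsplit
    _ ≤ eLpNorm (μ[f - g | ℱ n]) 2 μ + eLpNorm (μ[g | ℱ n] - g) 2 μ + eLpNorm (g - f) 2 μ :=
      (eLpNorm_add_le (integrable_condExp.aestronglyMeasurable.add (hcond.sub hg1.1))
        (hg1.1.sub hf1.1) one_le_two).trans (add_le_add_left (eLpNorm_add_le
          integrable_condExp.aestronglyMeasurable (hcond.sub hg1.1) one_le_two) _)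
    _ ≤ ε / 3 + ε / 3 + ε / 3 := by
      gcongr
      exact (eLpNorm_condExp_le_eLpNorm _ one_le_two).trans hfg.le
    _ = ε := ENNReal.add_thirds ε

end MeasureTheory

theorem one_add_sum_mul_eq_ite {ι J : Type*} [Fintype ι] [Fintype J] [DecidableEq ι]
    [DecidableEq J] (hcard : Fintype.card ι = Fintype.card J + 1) {p : ι → ℝ} {v : ι → J → ℝ}
    (hsum : ∑ a, p a = 1) (hv0 : ∀ j, ∑ a, p a * v a j = 0)
    (hv2 : ∀ j l, ∑ a, p a * v a j * v a l = if j = l then (1 : ℝ) else 0) (a b : ι) :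
    p b * (1 + ∑ j, v a j * v b j) = if a = b then 1 else 0 := by
  -- With `w a = (1, v a)`, the hypotheses say `A * B = 1` for the square matrices below, and the
  -- claim is `B * A = 1`.
  let w : ι → Option J → ℝ := fun a c => c.elim 1 (v a)
  let A : Matrix (Option J) ι ℝ := Matrix.of fun c a => p a * w a c
  let B : Matrix ι (Option J) ℝ := Matrix.of fun a c => w a c
  have hAB : A * B = 1 := by
    ext (_ | j) (_ | l) <;>
      simp only [A, B, w, Matrix.mul_apply, Matrix.of_apply, Matrix.one_apply, Option.elim,
        mul_one, Option.some_inj, reduceCtorEq, if_true, if_false]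
    exacts [hsum, hv0 l, hv0 j, hv2 j l]
  have hBA := congrFun (congrFun ((Matrix.mul_eq_one_comm_of_card_eq _ _ _ (A := A) (B := B)
    (by rw [Fintype.card_option, hcard])).1 hAB) a) b
  simpa [A, B, w, Matrix.mul_apply, Matrix.one_apply, Fintype.sum_option, mul_add,
    Finset.mul_sum, mul_comm, mul_left_comm] using hBA

namespace CoordinateProcess

variable {d : ℕ}

def cyl (k : ℕ) (ω : ℕ → Fin (d + 1)) : Set (ℕ → Fin (d + 1)) := {x | ∀ l < k, x l = ω l}

theorem cyl_zero (ω : ℕ → Fin (d + 1)) : cyl 0 ω = Set.univ := by simp [cyl]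

theorem cyl_succ (k : ℕ) (ω : ℕ → Fin (d + 1)) :
    cyl (k + 1) ω = cyl k ω ∩ {x | x k = ω k} := by
  ext x
  simp only [cyl, Set.mem_inter_iff, Set.mem_ofPred_eq, Nat.lt_succ_iff_lt_or_eq, or_imp,
    forall_and, forall_eq]

theorem update_preimage_cyl (k : ℕ) (i : Fin (d + 1)) (ω : ℕ → Fin (d + 1)) :
    (fun x => Function.update x k i) ⁻¹' cyl k ω = cyl k ω := by
  ext x
  simp only [cyl, Set.mem_preimage, Set.mem_ofPred_eq]
  exact forall₂_congr fun l hl => by rw [Function.update_of_ne hl.ne]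

theorem measurableSet_Fprev_coordFilt_cyl (k : ℕ) (ω : ℕ → Fin (d + 1)) :
    MeasurableSet[Fprev (coordFilt d) k] (cyl k ω) := by
  cases k with
  | zero => rw [cyl_zero]; exact MeasurableSet.univ
  | succ n =>
    refine ⟨{fun i : Fin (n + 1) => ω i}, measurableSet_singleton _, ?_⟩
    ext x
    simp only [Set.mem_preimage, Set.mem_singleton_iff, funext_iff, cyl, Set.mem_ofPred_eq]
    exact ⟨fun h l hl => h ⟨l, hl⟩, fun h i => h i i.isLt⟩

theorem mem_iff_of_measurableSet_Fprev_coordFilt {k : ℕ} {s : Set (ℕ → Fin (d + 1))}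
    (hs : MeasurableSet[Fprev (coordFilt d) k] s) {x ω : ℕ → Fin (d + 1)} (hx : x ∈ cyl k ω) :
    x ∈ s ↔ ω ∈ s := by
  cases k with
  | zero =>
    rcases MeasurableSpace.measurableSet_bot_iff.1 hs with rfl | rfl <;> simp
  | succ n =>
    obtain ⟨T, -, rfl⟩ := hs
    have : (fun i : Fin (n + 1) => x i) = fun i : Fin (n + 1) => ω i :=
      funext fun i => hx i i.isLt
    simp only [Set.mem_preimage, this]

theorem Fprev_coordFilt_le (k : ℕ) : Fprev (coordFilt d) k ≤ MeasurableSpace.pi := by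
  cases k with
  | zero => exact bot_le
  | succ n => exact (measurable_pi_lambda _ fun i => measurable_pi_apply _).comap_le

theorem Fprev_coordFilt_mono : Monotone (Fprev (coordFilt d)) := by
  intro m n hmn
  cases m with
  | zero => exact bot_le
  | succ m =>
    cases n with
    | zero => omega
    | succ n =>
      rintro s ⟨T, hT, rfl⟩
      refine ⟨(fun y i => y (Fin.castLE (by omega) i)) ⁻¹' T, ?_, rfl⟩
      exact (measurable_pi_lambda _ fun i => measurable_pi_apply _) hT

theorem measurable_coord_Fprev_coordFilt (l : ℕ) :
    Measurable[Fprev (coordFilt d) (l + 1)] fun ω : ℕ → Fin (d + 1) => ω l :=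
  (measurable_pi_apply (⟨l, l.lt_succ_self⟩ : Fin (l + 1))).comp
    (comap_measurable fun (ω : ℕ → Fin (d + 1)) (i : Fin (l + 1)) => ω i)

def coordFiltration (d : ℕ) :
    Filtration ℕ (MeasurableSpace.pi : MeasurableSpace (ℕ → Fin (d + 1))) :=
  ⟨Fprev (coordFilt d), Fprev_coordFilt_mono, Fprev_coordFilt_le⟩

theorem iSup_coordFiltration : ⨆ n, coordFiltration d n = MeasurableSpace.pi :=
  le_antisymm (iSup_le (coordFiltration d).le) <| iSup_le fun l =>
    (measurable_coord_Fprev_coordFilt l).comap_le.trans (le_iSup (coordFiltration d ·) (l + 1))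

theorem measurableSet_cyl (k : ℕ) (ω : ℕ → Fin (d + 1)) : MeasurableSet (cyl k ω) :=
  Fprev_coordFilt_le k _ (measurableSet_Fprev_coordFilt_cyl k ω)

theorem measurableSet_coord_eq (k : ℕ) (i : Fin (d + 1)) :
    MeasurableSet {x : ℕ → Fin (d + 1) | x k = i} :=
  measurableSet_eq_fun (measurable_pi_apply k) measurable_const

theorem measurable_update_iSup_comap_ne (k : ℕ) (i : Fin (d + 1)) :
    Measurable[⨆ l ∈ ({k}ᶜ : Set ℕ),
      MeasurableSpace.comap (fun ω : ℕ → Fin (d + 1) => ω l) inferInstance]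
      fun ω => Function.update ω k i := by
  refine (@measurable_pi_iff _ _ (fun _ => Fin (d + 1)) (⨆ l ∈ ({k}ᶜ : Set ℕ),
    MeasurableSpace.comap (fun ω : ℕ → Fin (d + 1) => ω l) inferInstance) _ _).2 fun l => ?_
  by_cases h : l = k
  · subst h
    simp only [Function.update_self]
    exact measurable_const
  · simp only [Function.update_of_ne h]
    exact (comap_measurable _).mono
      (le_biSup (fun l => MeasurableSpace.comap (fun ω : ℕ → Fin (d + 1) => ω l) _) h) le_rfl

theorem measurable_update_coord (k : ℕ) (i : Fin (d + 1)) :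
    Measurable fun ω : ℕ → Fin (d + 1) => Function.update ω k i :=
  measurable_update'.comp (measurable_id.prodMk measurable_const)

variable {μ : Measure (ℕ → Fin (d + 1))} {p : ℕ → Fin (d + 1) → ℝ}

structure HasIndepSteps (μ : Measure (ℕ → Fin (d + 1))) (p : ℕ → Fin (d + 1) → ℝ) : Prop where
  pos : ∀ k a, 0 < p k a
  marginal : ∀ k a, μ {ω | ω k = a} = ENNReal.ofReal (p k a)
  indep : iIndepFun (fun k (ω : ℕ → Fin (d + 1)) => ω k) μ

namespace HasIndepSteps

theorem map_update_eq (hμ : HasIndepSteps μ p) (k : ℕ) (i : Fin (d + 1)) :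
    μ.map (fun ω => Function.update ω k i)
      = (ENNReal.ofReal (p k i))⁻¹ • μ.restrict {ω | ω k = i} := by
  -- On `{ω | ω k = i}` the update is the identity, and it only reads the coordinates other
  -- than `k`, which are independent of `ω k`.
  have hind := indep_iSup_of_disjoint (fun l => (measurable_pi_apply l).comap_le)
    ((iIndepFun_iff_iIndep _ _ _).1 hμ.indep) (disjoint_compl_left (a := ({k} : Set ℕ)))
  have hcoord : MeasurableSet[⨆ l ∈ ({k} : Set ℕ),
      MeasurableSpace.comap (fun ω : ℕ → Fin (d + 1) => ω l) inferInstance] {ω | ω k = i} :=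
    le_biSup (fun l => MeasurableSpace.comap (fun ω : ℕ → Fin (d + 1) => ω l) _)
      (Set.mem_singleton k) _ ⟨{i}, measurableSet_singleton i, rfl⟩
  ext A hA
  have hset : A ∩ {ω | ω k = i} = (fun ω => Function.update ω k i) ⁻¹' A ∩ {ω | ω k = i} := by
    ext ω
    simp only [Set.mem_inter_iff, Set.mem_preimage, Set.mem_ofPred_eq]
    exact and_congr_left fun h => by rw [← h, Function.update_eq_self]
  have hpi : ENNReal.ofReal (p k i) ≠ 0 := (ENNReal.ofReal_pos.2 (hμ.pos k i)).ne'
  rw [Measure.smul_apply, Measure.map_apply (measurable_update_coord k i) hA,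
    Measure.restrict_apply hA, hset, (Indep_iff _ _ _).1 hind _ _
      (measurable_update_iSup_comap_ne k i hA) hcoord, hμ.marginal, smul_eq_mul, mul_comm,
    mul_assoc, ENNReal.mul_inv_cancel hpi ENNReal.ofReal_ne_top, mul_one]

theorem integrable_map_update (hμ : HasIndepSteps μ p) {f : (ℕ → Fin (d + 1)) → ℝ}
    (hf : Integrable f μ) (k : ℕ) (i : Fin (d + 1)) :
    Integrable f (μ.map fun ω => Function.update ω k i) := by
  rw [hμ.map_update_eq]
  exact hf.restrict.smul_measure (ENNReal.inv_ne_top.2 (ENNReal.ofReal_pos.2 (hμ.pos k i)).ne')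

theorem integrable_comp_update (hμ : HasIndepSteps μ p) {f : (ℕ → Fin (d + 1)) → ℝ}
    (hf : Integrable f μ) (k : ℕ) (i : Fin (d + 1)) :
    Integrable (fun ω => f (Function.update ω k i)) μ := by
  have hfU := hμ.integrable_map_update hf k i
  exact (integrable_map_measure hfU.aestronglyMeasurable
    (measurable_update_coord k i).aemeasurable).1 hfU

theorem setIntegral_inter_coord_eq (hμ : HasIndepSteps μ p) {f : (ℕ → Fin (d + 1)) → ℝ}
    (hf : Integrable f μ) {k : ℕ} {i : Fin (d + 1)} {C : Set (ℕ → Fin (d + 1))}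
    (hC : MeasurableSet C) (hCk : (fun x => Function.update x k i) ⁻¹' C = C) :
    ∫ x in C ∩ {x | x k = i}, f x ∂μ = p k i * ∫ x in C, f (Function.update x k i) ∂μ := by
  have hpi := hμ.pos k i
  calc ∫ x in C ∩ {x | x k = i}, f x ∂μ
      = p k i * (p k i)⁻¹ * ∫ x in C ∩ {x | x k = i}, f x ∂μ := by field_simp
    _ = p k i * ∫ x in C, f x ∂(μ.map fun ω => Function.update ω k i) := by
      rw [hμ.map_update_eq, Measure.restrict_smul, integral_smul_measure,
        Measure.restrict_restrict hC, ENNReal.toReal_inv, ENNReal.toReal_ofReal hpi.le,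
        smul_eq_mul, mul_assoc]
    _ = p k i * ∫ x in C, f (Function.update x k i) ∂μ := by
      rw [setIntegral_map hC (hμ.integrable_map_update hf k i).aestronglyMeasurable
        (measurable_update_coord k i).aemeasurable, hCk]

theorem integrable_fdGrad (hμ : HasIndepSteps μ p) (v : ℕ → Fin (d + 1) → Fin d → ℝ)
    {F : (ℕ → Fin (d + 1)) → ℝ} (hF : Integrable F μ) (k : ℕ) (j : Fin d) :
    Integrable (fdGrad d p v F k j) μ :=
  integrable_finsetSum _ fun i _ => (hμ.integrable_comp_update hF k i).const_mul _

theorem setIntegral_cyl_fdGrad (hμ : HasIndepSteps μ p) (v : ℕ → Fin (d + 1) → Fin d → ℝ)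
    {F : (ℕ → Fin (d + 1)) → ℝ} (hF : Integrable F μ) (k : ℕ) (j : Fin d)
    (ω : ℕ → Fin (d + 1)) :
    ∫ x in cyl k ω, fdGrad d p v F k j x ∂μ
      = ∑ i, v k i j * ∫ x in cyl k ω ∩ {x | x k = i}, F x ∂μ := by
  simp only [fdGrad]
  rw [integral_finsetSum _ fun i _ =>
    ((hμ.integrable_comp_update hF k i).const_mul _).integrableOn]
  refine Finset.sum_congr rfl fun i _ => ?_
  rw [hμ.setIntegral_inter_coord_eq hF (measurableSet_cyl k ω) (update_preimage_cyl k i ω),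
    integral_const_mul]
  ring

end HasIndepSteps

theorem setIntegral_eq_sum_inter_coord {F : (ℕ → Fin (d + 1)) → ℝ} (hF : Integrable F μ)
    {C : Set (ℕ → Fin (d + 1))} (hC : MeasurableSet C) (k : ℕ) :
    ∫ x in C, F x ∂μ = ∑ i, ∫ x in C ∩ {x | x k = i}, F x ∂μ := by
  rw [← integral_iUnion_fintype (fun i => hC.inter (measurableSet_coord_eq k i))
    (fun i i' hii' => Disjoint.inter_right' C (Disjoint.inter_left' C
      (Set.disjoint_left.2 fun x hi hi' => hii' (hi.symm.trans hi'))))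
    (fun i => hF.integrableOn), ← Set.inter_iUnion]
  congr
  ext x
  simp

variable [IsProbabilityMeasure μ]

namespace HasIndepSteps

theorem sum_eq_one (hμ : HasIndepSteps μ p) (k : ℕ) : ∑ a, p k a = 1 := by
  have h := sum_measure_preimage_singleton (μ := μ) Finset.univ
    (fun a _ => measurableSet_coord_eq (d := d) k a)
  simp only [Finset.coe_univ, Set.preimage_univ, measure_univ] at h
  rw [← ENNReal.ofReal_eq_one, ENNReal.ofReal_sum_of_nonneg fun a _ => (hμ.pos k a).le, ← h]
  exact Finset.sum_congr rfl fun a _ => (hμ.marginal k a).symm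

theorem measureReal_inter_coord_eq (hμ : HasIndepSteps μ p) {k : ℕ} {i : Fin (d + 1)}
    {C : Set (ℕ → Fin (d + 1))} (hC : MeasurableSet C)
    (hCk : (fun x => Function.update x k i) ⁻¹' C = C) :
    μ.real (C ∩ {x | x k = i}) = p k i * μ.real C := by
  simpa using hμ.setIntegral_inter_coord_eq (integrable_const (1 : ℝ)) hC hCk

theorem measureReal_cyl_pos (hμ : HasIndepSteps μ p) (k : ℕ) (ω : ℕ → Fin (d + 1)) :
    0 < μ.real (cyl k ω) := by
  induction k with
  | zero => simp [cyl_zero]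
  | succ k ih =>
    rw [cyl_succ, hμ.measureReal_inter_coord_eq (measurableSet_cyl k ω)
      (update_preimage_cyl k _ ω)]
    exact mul_pos (hμ.pos _ _) ih

theorem condExp_Fprev_coordFilt_eq_setAverage (hμ : HasIndepSteps μ p)
    {f : (ℕ → Fin (d + 1)) → ℝ} (hf : Integrable f μ) (k : ℕ) (ω : ℕ → Fin (d + 1)) :
    μ[f | Fprev (coordFilt d) k] ω = ⨍ x in cyl k ω, f x ∂μ :=
  condExp_eq_setAverage (Fprev_coordFilt_le k) hf (measurableSet_Fprev_coordFilt_cyl k ω)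
    ((measureReal_ne_zero_iff (measure_ne_top _ _)).1 (hμ.measureReal_cyl_pos k ω).ne')
    fun _ hs hωs _ hx => (mem_iff_of_measurableSet_Fprev_coordFilt hs hx).2 hωs

theorem sum_condExp_fdGrad_mul (hμ : HasIndepSteps μ p) {v : ℕ → Fin (d + 1) → Fin d → ℝ}
    (hv0 : ∀ k j, ∑ a, p k a * v k a j = 0)
    (hv2 : ∀ k j l, ∑ a, p k a * v k a j * v k a l = if j = l then (1 : ℝ) else 0)
    {F : (ℕ → Fin (d + 1)) → ℝ} (hF : Integrable F μ) (k : ℕ) (ω : ℕ → Fin (d + 1)) :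
    ∑ j, μ[fdGrad d p v F k j | Fprev (coordFilt d) k] ω * v k (ω k) j
      = μ[F | Fprev (coordFilt d) (k + 1)] ω - μ[F | Fprev (coordFilt d) k] ω := by
  have hvv : ∀ i, ∑ j, v k i j * v k (ω k) j = (if i = ω k then (p k (ω k))⁻¹ else 0) - 1 :=
    fun i => by
      have := one_add_sum_mul_eq_ite (by simp) (hμ.sum_eq_one k) (hv0 k) (hv2 k) i (ω k)
      split_ifs at this ⊢
      · have := hμ.pos k (ω k)
        field_simp
        linarith
      · linarith [(mul_eq_zero.1 this).resolve_left (hμ.pos k (ω k)).ne']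
  simp only [hμ.condExp_Fprev_coordFilt_eq_setAverage (hμ.integrable_fdGrad v hF k _),
    hμ.condExp_Fprev_coordFilt_eq_setAverage hF, setAverage_eq, smul_eq_mul,
    hμ.setIntegral_cyl_fdGrad v hF, cyl_succ,
    hμ.measureReal_inter_coord_eq (measurableSet_cyl k ω) (update_preimage_cyl k _ ω),
    setIntegral_eq_sum_inter_coord hF (measurableSet_cyl k ω) k]
  obtain ⟨I, hI⟩ : ∃ I : Fin (d + 1) → ℝ,
      ∀ i, ∫ x in cyl k ω ∩ {x | x k = i}, F x ∂μ = I i := ⟨_, fun _ => rfl⟩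
  simp only [hI]
  calc ∑ j, (μ.real (cyl k ω))⁻¹ * (∑ i, v k i j * I i) * v k (ω k) j
      = (μ.real (cyl k ω))⁻¹ * ∑ i, (∑ j, v k i j * v k (ω k) j) * I i := by
        simp only [Finset.mul_sum, Finset.sum_mul]
        rw [Finset.sum_comm]
        exact Finset.sum_congr rfl fun i _ => Finset.sum_congr rfl fun j _ => by ring
    _ = (μ.real (cyl k ω))⁻¹ * ((p k (ω k))⁻¹ * I (ω k) - ∑ i, I i) := by
        simp only [hvv, sub_mul, ite_mul, zero_mul, one_mul, Finset.sum_sub_distrib,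
          Finset.sum_ite_eq', Finset.mem_univ, if_true]
    _ = (p k (ω k) * μ.real (cyl k ω))⁻¹ * I (ω k) - (μ.real (cyl k ω))⁻¹ * ∑ i, I i := by
        rw [mul_inv]; ring

theorem sum_range_sum_condExp_fdGrad_mul (hμ : HasIndepSteps μ p)
    {v : ℕ → Fin (d + 1) → Fin d → ℝ} (hv0 : ∀ k j, ∑ a, p k a * v k a j = 0)
    (hv2 : ∀ k j l, ∑ a, p k a * v k a j * v k a l = if j = l then (1 : ℝ) else 0)
    {F : (ℕ → Fin (d + 1)) → ℝ} (hF : Integrable F μ) (N : ℕ) (ω : ℕ → Fin (d + 1)) :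
    ∑ k ∈ Finset.range N, ∑ j, μ[fdGrad d p v F k j | Fprev (coordFilt d) k] ω * v k (ω k) j
      = μ[F | Fprev (coordFilt d) N] ω - ∫ x, F x ∂μ := by
  simp only [hμ.sum_condExp_fdGrad_mul hv0 hv2 hF]
  rw [Finset.sum_range_sub fun k => μ[F | Fprev (coordFilt d) k] ω]
  simp [Fprev]

end HasIndepSteps

end CoordinateProcess

/-- Clark–Ocone formula for an obtuse random walk:
`F = E[F] + Σ_k ⟨E[D_k F | F_{k-1}], Y_k⟩`, with convergence in `L²(Ω)`. -/
theorem stmt_13 (d : ℕ) (μ : Measure (ℕ → Fin (d + 1))) [IsProbabilityMeasure μ]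
    (p : ℕ → Fin (d + 1) → ℝ) (v : ℕ → Fin (d + 1) → Fin d → ℝ)
    (hp : ∀ k a, 0 < p k a)
    (hmarg : ∀ k a, μ {ω | ω k = a} = ENNReal.ofReal (p k a))
    (hindep : iIndepFun (fun k (ω : ℕ → Fin (d + 1)) => ω k) μ)
    (hv0 : ∀ k j, ∑ a, p k a * v k a j = 0)
    (hv2 : ∀ k j l, ∑ a, p k a * v k a j * v k a l = if j = l then (1 : ℝ) else 0)
    (F : (ℕ → Fin (d + 1)) → ℝ) (hF : MemLp F 2 μ) :
    Tendsto
      (fun N => eLpNorm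
        (fun ω => F ω - ∫ x, F x ∂μ -
          ∑ k ∈ Finset.range N, ∑ j,
            (μ[fdGrad d p v F k j | Fprev (coordFilt d) k]) ω * v k (ω k) j) 2 μ)
      atTop (nhds 0) := by
  have hμ : CoordinateProcess.HasIndepSteps μ p := ⟨hp, hmarg, hindep⟩
  refine (hF.tendsto_eLpNorm_two_condExp CoordinateProcess.iSup_coordFiltration).congr
    fun N => ?_
  rw [← eLpNorm_neg]
  congr 1
  ext ω
  simp only [Pi.neg_apply, Pi.sub_apply,
    hμ.sum_range_sum_condExp_fdGrad_mul hv0 hv2 (hF.integrable one_le_two)]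
  change -(μ[F | Fprev (coordFilt d) N] ω - F ω) = _
  ring

end
end

section
/- Predictable representation property: if (M_n) is an R^d-valued L² martingale with respect to the filtration of an obtuse random walk, then there exists a predictable process (γ_k) with values in d×d matrices such that M_n^i = M_{-1}^i + Σ_{k=0}^n ⟨γ_k^i, Y_k⟩ for all n and i ∈ {1,...,d}, and one may take γ_k^i = E[D_k M_k^i | F_{k-1}]. -/
/-!
Obtuseness of `(p_k, v_k)` says that the matrix `W` with rows `(1, v_k a)` satisfies
`Wᵀ diag(p_k) W = 1`, hence also `W Wᵀ diag(p_k) = 1`: every function `G` of the `k`-th step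
expands as `G a = Σ_b p_k b G b + Σ_j (Σ_b p_k b v_k b j G b) v_k a j`. Applied to
`a ↦ M_k(ω with ω_k := a)` this writes `M_k` as its average over the `k`-th step plus
`Σ_j D_k^j M_k · v_k(ω_k) j`. Since the steps are independent, that average is
`E[M_k | F_{k-1}]`, while `D_k M_k` is already `F_{k-1}`-measurable; the martingale property
then telescopes these one-step identities.
-/

open MeasureTheory Finset ProbabilityTheory Filter

noncomputable section

def obtuseMatrix {d : ℕ} (v : Fin (d + 1) → Fin d → ℝ) :
    Matrix (Fin (d + 1)) (Fin (d + 1)) ℝ :=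
  .of fun a => Fin.cons 1 (v a)

section Obtuse

open Matrix

variable {d : ℕ} {p : Fin (d + 1) → ℝ} {v : Fin (d + 1) → Fin d → ℝ}

lemma obtuseMatrix_transpose_mul_diagonal_mul (hsum : ∑ a, p a = 1)
    (hv0 : ∀ j, ∑ a, p a * v a j = 0)
    (hv2 : ∀ j l, ∑ a, p a * v a j * v a l = if j = l then 1 else 0) :
    (obtuseMatrix v)ᵀ * diagonal p * obtuseMatrix v = 1 := by
  ext c c'
  rw [mul_apply]
  simp only [mul_diagonal, transpose_apply, obtuseMatrix, of_apply, one_apply]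
  induction c using Fin.cases with
  | zero =>
    induction c' using Fin.cases with
    | zero => simpa using hsum
    | succ l => simpa [(Fin.succ_ne_zero l).symm] using hv0 l
  | succ j =>
    induction c' using Fin.cases with
    | zero => simpa [Fin.succ_ne_zero j, mul_comm] using hv0 j
    | succ l => simpa [mul_comm] using hv2 j l

lemma obtuse_decomposition (hsum : ∑ a, p a = 1)
    (hv0 : ∀ j, ∑ a, p a * v a j = 0)
    (hv2 : ∀ j l, ∑ a, p a * v a j * v a l = if j = l then 1 else 0)
    (G : Fin (d + 1) → ℝ) (a : Fin (d + 1)) :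
    G a = ∑ b, p b * G b + ∑ j, (∑ b, p b * v b j * G b) * v a j := by
  have hinv : obtuseMatrix v * ((obtuseMatrix v)ᵀ * diagonal p) = 1 :=
    mul_eq_one_comm.mp (obtuseMatrix_transpose_mul_diagonal_mul hsum hv0 hv2)
  have h := congrFun (congrArg (· *ᵥ G) hinv) a
  rw [one_mulVec, ← mulVec_mulVec, ← mulVec_mulVec, funext (mulVec_diagonal p G)] at h
  rw [← h]
  simp [mulVec, dotProduct, Fin.sum_univ_succ, obtuseMatrix, mul_comm, mul_left_comm]

end Obtuse

def coordSigma (d k : ℕ) : MeasurableSpace (ℕ → Fin (d + 1)) :=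
  MeasurableSpace.comap (fun ω => ω k) inferInstance

section CoordFilt

variable {d : ℕ}

lemma measurable_coordFilt_apply {n k : ℕ} (hk : k ≤ n) :
    Measurable[coordFilt d n] fun ω : ℕ → Fin (d + 1) => ω k :=
  (measurable_pi_apply (⟨k, by omega⟩ : Fin (n + 1))).comp
    (Measurable.of_comap_le (f := fun (ω : ℕ → Fin (d + 1)) (j : Fin (n + 1)) => ω j) le_rfl)

lemma coordSigma_le_coordFilt {n k : ℕ} (hk : k ≤ n) : coordSigma d k ≤ coordFilt d n :=
  (measurable_coordFilt_apply hk).comap_le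

lemma coordFilt_le_pi (n : ℕ) : coordFilt d n ≤ MeasurableSpace.pi :=
  (measurable_pi_lambda (fun (ω : ℕ → Fin (d + 1)) (j : Fin (n + 1)) => ω j) fun j =>
    measurable_pi_apply (j : ℕ)).comap_le

lemma coordFilt_mono : Monotone (coordFilt d) := by
  intro m n hmn
  have h : Measurable[coordFilt d n] fun (ω : ℕ → Fin (d + 1)) (j : Fin (m + 1)) => ω j :=
    (@measurable_pi_iff _ _ _ (coordFilt d n) _ _).mpr fun j =>
      measurable_coordFilt_apply (by omega)
  exact h.comap_le

lemma Fprev_coordFilt_le (k : ℕ) : Fprev (coordFilt d) k ≤ coordFilt d k := by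
  cases k with
  | zero => exact bot_le
  | succ m => exact coordFilt_mono m.le_succ

lemma Fprev_coordFilt_le_pi (k : ℕ) : Fprev (coordFilt d) k ≤ MeasurableSpace.pi :=
  (Fprev_coordFilt_le k).trans (coordFilt_le_pi k)

lemma Fprev_coordFilt_le_iSup (k : ℕ) :
    Fprev (coordFilt d) k ≤ ⨆ j ∈ Set.Iio k, coordSigma d j := by
  cases k with
  | zero => exact bot_le
  | succ m =>
    refine Measurable.comap_le ((@measurable_pi_iff _ _ _ (_) _ _).mpr fun j => ?_)
    exact Measurable.of_comap_le
      (le_iSup₂ (f := fun j (_ : j ∈ Set.Iio (m + 1)) => coordSigma d j) (j : ℕ) j.isLt)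

variable {β : Type*} [MeasurableSpace β] [MeasurableSingletonClass β]

lemma Measurable.eq_of_coordFilt {n : ℕ} {H : (ℕ → Fin (d + 1)) → β}
    (hH : Measurable[coordFilt d n] H) {ω ω' : ℕ → Fin (d + 1)}
    (h : ∀ k ≤ n, ω k = ω' k) :
    H ω = H ω' :=
  hH.factorsThrough (funext fun k => h k (by omega))

lemma Measurable.finite_range_of_coordFilt {n : ℕ} {H : (ℕ → Fin (d + 1)) → β}
    (hH : Measurable[coordFilt d n] H) : (Set.range H).Finite := by
  refine (Set.finite_range fun x : Fin (n + 1) → Fin (d + 1) =>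
    H fun k => if hk : k < n + 1 then x ⟨k, hk⟩ else 0).subset ?_
  rintro _ ⟨ω, rfl⟩
  exact ⟨fun k => ω k, hH.eq_of_coordFilt fun k hk => by simp [Nat.lt_succ_of_le hk]⟩

lemma Measurable.integrable_of_coordFilt {n : ℕ} {H : (ℕ → Fin (d + 1)) → ℝ}
    (hH : Measurable[coordFilt d n] H) (μ : Measure (ℕ → Fin (d + 1))) [IsFiniteMeasure μ] :
    Integrable H μ := by
  obtain ⟨C, hC⟩ := (hH.finite_range_of_coordFilt.image (‖·‖)).bddAbove
  exact .of_bound (hH.mono (coordFilt_le_pi n) le_rfl).aestronglyMeasurable C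
    (.of_forall fun ω => hC ⟨H ω, ⟨ω, rfl⟩, rfl⟩)

lemma measurable_Fprev_coordFilt_update {k : ℕ} {H : (ℕ → Fin (d + 1)) → β}
    (hH : Measurable[coordFilt d k] H) (a : Fin (d + 1)) :
    Measurable[Fprev (coordFilt d) k] fun ω => H (Function.update ω k a) := by
  cases k with
  | zero =>
    have hconst : (fun ω => H (Function.update ω 0 a)) = fun _ => H fun _ => a :=
      funext fun ω => hH.eq_of_coordFilt fun j hj => by
        obtain rfl : j = 0 := by omega
        simp
    rw [hconst]
    exact measurable_const
  | succ m =>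
    set g : (Fin (m + 1) → Fin (d + 1)) → β :=
      fun x => H fun j => if hj : j < m + 1 then x ⟨j, hj⟩ else a
    have hfactor : (fun ω => H (Function.update ω (m + 1) a))
        = g ∘ fun (ω : ℕ → Fin (d + 1)) (j : Fin (m + 1)) => ω j :=
      funext fun ω => hH.eq_of_coordFilt fun j hj => by
        rcases Nat.lt_or_ge j (m + 1) with hjm | hjm
        · simp [hjm, hjm.ne]
        · simp [show j = m + 1 by omega]
    rw [hfactor]
    exact (measurable_of_finite g).comp (Measurable.of_comap_le le_rfl)

end CoordFilt

section Independence

variable {d : ℕ} {μ : Measure (ℕ → Fin (d + 1))}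

lemma indep_coordSigma_Fprev_coordFilt
    (hindep : iIndepFun (fun k (ω : ℕ → Fin (d + 1)) => ω k) μ) (k : ℕ) :
    Indep (coordSigma d k) (Fprev (coordFilt d) k) μ := by
  have h := indep_iSup_of_disjoint (fun j => (measurable_pi_apply j).comap_le) hindep.iIndep
    (S := {k}) (T := Set.Iio k) (by simp)
  rw [_root_.iSup_singleton] at h
  exact indep_of_indep_of_le_right h (Fprev_coordFilt_le_iSup k)

lemma condExp_Fprev_coordFilt [IsProbabilityMeasure μ]
    (hindep : iIndepFun (fun k (ω : ℕ → Fin (d + 1)) => ω k) μ) {k : ℕ}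
    {p : Fin (d + 1) → ℝ} (hmarg : ∀ a, μ.real {ω | ω k = a} = p a)
    {f : (ℕ → Fin (d + 1)) → ℝ}
    (hf : Measurable[coordFilt d k] f) :
    μ[f | Fprev (coordFilt d) k] =ᵐ[μ] fun ω => ∑ a, p a * f (Function.update ω k a) := by
  set ind : Fin (d + 1) → (ℕ → Fin (d + 1)) → ℝ := fun a => {ω | ω k = a}.indicator 1
  set G : Fin (d + 1) → (ℕ → Fin (d + 1)) → ℝ := fun a ω => f (Function.update ω k a)
  have hind : ∀ a, Measurable[coordSigma d k] (ind a) := fun a =>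
    (measurable_of_finite (({a} : Set (Fin (d + 1))).indicator 1)).comp (comap_measurable _)
  have hG : ∀ a, Measurable[Fprev (coordFilt d) k] (G a) :=
    measurable_Fprev_coordFilt_update hf
  have hind_int : ∀ a, Integrable (ind a) μ := fun a =>
    ((hind a).mono (coordSigma_le_coordFilt le_rfl) le_rfl).integrable_of_coordFilt μ
  have hindG_int : ∀ a, Integrable (ind a * G a) μ := fun a =>
    (((hind a).mono (coordSigma_le_coordFilt le_rfl) le_rfl).mul
      ((hG a).mono (Fprev_coordFilt_le k) le_rfl)).integrable_of_coordFilt μ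
  have hsplit : f = ∑ a, ind a * G a := by
    funext ω
    simp [ind, G, Set.indicator_apply]
  have hcond_ind : ∀ a, μ[ind a | Fprev (coordFilt d) k] =ᵐ[μ] fun _ => p a := fun a => by
    have h := condExp_indep_eq (measurable_pi_apply k).comap_le (Fprev_coordFilt_le_pi k)
      (hind a).stronglyMeasurable (indep_coordSigma_Fprev_coordFilt hindep k)
    have hs : MeasurableSet {ω : ℕ → Fin (d + 1) | ω k = a} :=
      measurableSet_eq_fun (measurable_pi_apply k) measurable_const
    rwa [integral_indicator_one hs, hmarg] at h
  have hcond : ∀ a, μ[ind a * G a | Fprev (coordFilt d) k] =ᵐ[μ] fun ω => p a * G a ω :=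
    fun a => (condExp_mul_of_stronglyMeasurable_right (hG a).stronglyMeasurable (hindG_int a)
      (hind_int a)).trans ((hcond_ind a).mul .rfl)
  filter_upwards [condExp_finsetSum (fun a _ => hindG_int a) (Fprev (coordFilt d) k),
    ae_all_iff.2 hcond] with ω hsum hω
  rw [congrArg (μ[·|Fprev (coordFilt d) k]) hsplit, hsum, Finset.sum_apply]
  exact Finset.sum_congr rfl fun a _ => hω a

end Independence

section Gradient

variable {d : ℕ} {p : ℕ → Fin (d + 1) → ℝ} {v : ℕ → Fin (d + 1) → Fin d → ℝ}

lemma eq_sum_update_add_sum_fdGrad {k : ℕ} (hsum : ∑ a, p k a = 1)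
    (hv0 : ∀ j, ∑ a, p k a * v k a j = 0)
    (hv2 : ∀ j l, ∑ a, p k a * v k a j * v k a l = if j = l then 1 else 0)
    (f : (ℕ → Fin (d + 1)) → ℝ) (ω : ℕ → Fin (d + 1)) :
    f ω = ∑ a, p k a * f (Function.update ω k a) +
      ∑ j, fdGrad d p v f k j ω * v k (ω k) j := by
  simpa only [fdGrad, Function.update_eq_self] using
    obtuse_decomposition hsum hv0 hv2 (fun a => f (Function.update ω k a)) (ω k)

lemma measurable_fdGrad {k : ℕ} {f : (ℕ → Fin (d + 1)) → ℝ}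
    (hf : Measurable[coordFilt d k] f) (j : Fin d) :
    Measurable[Fprev (coordFilt d) k] (fdGrad d p v f k j) :=
  Finset.measurable_sum _ fun a _ => (measurable_Fprev_coordFilt_update hf a).const_mul _

lemma condExp_fdGrad (μ : Measure (ℕ → Fin (d + 1))) [IsFiniteMeasure μ] {k : ℕ}
    {f : (ℕ → Fin (d + 1)) → ℝ} (hf : Measurable[coordFilt d k] f) (j : Fin d) :
    μ[fdGrad d p v f k j | Fprev (coordFilt d) k] = fdGrad d p v f k j :=
  condExp_of_stronglyMeasurable (Fprev_coordFilt_le_pi k)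
    (measurable_fdGrad hf j).stronglyMeasurable
    (((measurable_fdGrad hf j).mono (Fprev_coordFilt_le k) le_rfl).integrable_of_coordFilt μ)

lemma ae_eq_condExp_add_sum_fdGrad {μ : Measure (ℕ → Fin (d + 1))} [IsProbabilityMeasure μ]
    (hindep : iIndepFun (fun k (ω : ℕ → Fin (d + 1)) => ω k) μ) {k : ℕ}
    (hmarg : ∀ a, μ.real {ω | ω k = a} = p k a)
    (hv0 : ∀ j, ∑ a, p k a * v k a j = 0)
    (hv2 : ∀ j l, ∑ a, p k a * v k a j * v k a l = if j = l then 1 else 0)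
    {f : (ℕ → Fin (d + 1)) → ℝ} (hf : Measurable[coordFilt d k] f) :
    f =ᵐ[μ] fun ω =>
      μ[f | Fprev (coordFilt d) k] ω + ∑ j, fdGrad d p v f k j ω * v k (ω k) j := by
  have hsum : ∑ a, p k a = 1 := by
    simp_rw [← hmarg]
    exact (sum_measureReal_preimage_singleton (μ := μ) (f := fun ω : ℕ → Fin (d + 1) => ω k)
      univ fun a _ => measurableSet_eq_fun (measurable_pi_apply k) measurable_const).trans
      (by simp)
  filter_upwards [condExp_Fprev_coordFilt hindep hmarg hf] with ω hω
  rw [hω]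
  exact eq_sum_update_add_sum_fdGrad hsum hv0 hv2 f ω

end Gradient

theorem stmt_17_general (d : ℕ) (μ : Measure (ℕ → Fin (d + 1))) [IsProbabilityMeasure μ]
    (p : ℕ → Fin (d + 1) → ℝ) (v : ℕ → Fin (d + 1) → Fin d → ℝ)
    (hp : ∀ k a, 0 < p k a)
    (hmarg : ∀ k a, μ {ω | ω k = a} = ENNReal.ofReal (p k a))
    (hindep : iIndepFun (fun k (ω : ℕ → Fin (d + 1)) => ω k) μ)
    (hv0 : ∀ k j, ∑ a, p k a * v k a j = 0)
    (hv2 : ∀ k j l, ∑ a, p k a * v k a j * v k a l = if j = l then (1 : ℝ) else 0)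
    (M : ℕ → (ℕ → Fin (d + 1)) → Fin d → ℝ)
    (hMadp : ∀ n i, Measurable[coordFilt d n] fun ω => M n ω i)
    (hMmart : ∀ n i, μ[fun ω => M (n + 1) ω i | coordFilt d n] =ᵐ[μ] fun ω => M n ω i) :
    ∃ γ : ℕ → (ℕ → Fin (d + 1)) → Fin d → Fin d → ℝ,
      (∀ k i j, StronglyMeasurable[Fprev (coordFilt d) k] fun ω => γ k ω i j) ∧
      (∀ k i j, (fun ω => γ k ω i j) =ᵐ[μ]
        μ[fdGrad d p v (fun ω => M k ω i) k j | Fprev (coordFilt d) k]) ∧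
      (∀ n i, (fun ω => M n ω i) =ᵐ[μ]
        fun ω => (∫ x, M 0 x i ∂μ) +
          ∑ k ∈ Finset.range (n + 1), ∑ j, γ k ω i j * v k (ω k) j) := by
  have hmarg_real : ∀ k a, μ.real {ω | ω k = a} = p k a := fun k a => by
    rw [measureReal_def, hmarg, ENNReal.toReal_ofReal (hp k a).le]
  set γ : ℕ → (ℕ → Fin (d + 1)) → Fin d → Fin d → ℝ :=
    fun k ω i j => μ[fdGrad d p v (fun ω => M k ω i) k j | Fprev (coordFilt d) k] ω
  have hdecomp : ∀ k i, (fun ω => M k ω i) =ᵐ[μ] fun ω =>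
      μ[fun ω => M k ω i | Fprev (coordFilt d) k] ω + ∑ j, γ k ω i j * v k (ω k) j :=
    fun k i => by
      simpa only [γ, condExp_fdGrad μ (hMadp k i)] using
        ae_eq_condExp_add_sum_fdGrad hindep (hmarg_real k) (hv0 k) (hv2 k) (hMadp k i)
  refine ⟨γ, fun k i j => stronglyMeasurable_condExp, fun k i j => .rfl, fun n i => ?_⟩
  induction n with
  | zero =>
    filter_upwards [hdecomp 0 i] with ω hω
    simpa [Fprev, condExp_bot] using hω
  | succ n ih =>
    filter_upwards [hdecomp (n + 1) i, hMmart n i, ih] with ω hω hmart hn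
    rw [Finset.sum_range_succ, ← add_assoc, ← hn, ← hmart]
    exact hω

/-- predictable representation property: any `ℝ^d`-valued `L²` martingale
`(M_n)` of the obtuse random walk filtration satisfies
`M_n^i = M_{-1}^i + Σ_{k=0}^n ⟨γ_k^i, Y_k⟩` with the predictable process
`γ_k^i = E[D_k M_k^i | F_{k-1}]`. -/
theorem stmt_17 (d : ℕ) (μ : Measure (ℕ → Fin (d + 1))) [IsProbabilityMeasure μ]
    (p : ℕ → Fin (d + 1) → ℝ) (v : ℕ → Fin (d + 1) → Fin d → ℝ)
    (hp : ∀ k a, 0 < p k a)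
    (hmarg : ∀ k a, μ {ω | ω k = a} = ENNReal.ofReal (p k a))
    (hindep : iIndepFun (fun k (ω : ℕ → Fin (d + 1)) => ω k) μ)
    (hv0 : ∀ k j, ∑ a, p k a * v k a j = 0)
    (hv2 : ∀ k j l, ∑ a, p k a * v k a j * v k a l = if j = l then (1 : ℝ) else 0)
    (M : ℕ → (ℕ → Fin (d + 1)) → Fin d → ℝ)
    (hM2 : ∀ n i, MemLp (fun ω => M n ω i) 2 μ)
    (hMadp : ∀ n i, Measurable[coordFilt d n] fun ω => M n ω i)
    (hMmart : ∀ n i, μ[fun ω => M (n + 1) ω i | coordFilt d n] =ᵐ[μ] fun ω => M n ω i) :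
    ∃ γ : ℕ → (ℕ → Fin (d + 1)) → Fin d → Fin d → ℝ,
      (∀ k i j, StronglyMeasurable[Fprev (coordFilt d) k] fun ω => γ k ω i j) ∧
      (∀ k i j, (fun ω => γ k ω i j) =ᵐ[μ]
        μ[fdGrad d p v (fun ω => M k ω i) k j | Fprev (coordFilt d) k]) ∧
      (∀ n i, (fun ω => M n ω i) =ᵐ[μ]
        fun ω => (∫ x, M 0 x i ∂μ) +
          ∑ k ∈ Finset.range (n + 1), ∑ j, γ k ω i j * v k (ω k) j) :=
  stmt_17_general d μ p v hp hmarg hindep hv0 hv2 M hMadp hMmart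

end
end
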